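/- arXiv:1901.06602 — 4 statements merged into one kernel-verified Lean document; each statement's English description precedes it below -/
import Mathlib

section
/- Let m, n be positive integers, d = m + n. For all integers 1 ≤ k ≤ d-1, f_{m,n}(k) ≤ δ_{m,n}, where f_{m,n}(k) = mn - k(d-k)mn/d² - {km/d}{kn/d} and δ_{m,n} = mn(1 - 1/d). -/
/-!
Writing `d = m + n`, the fractional parts are `{km/d} = (km mod d)/d` and `{kn/d} = (kn mod d)/d`,
so `d² (δ - f(k)) = (k(d-k) - d)·mn + (km mod d)(kn mod d)`. At `k = 1` and `k = d - 1` the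
residues are `m, n` (in some order) and `k(d-k) = d - 1`, so this vanishes; for `2 ≤ k ≤ d - 2`
already `k(d-k) ≥ k + (d-k) = d`.
-/

/-- `f_{m,n}(k) = mn - k(d-k)mn/d² - {km/d}·{kn/d}` where `d = m+n` and `{x}` is the
fractional part. -/
noncomputable def fmn (m n : ℕ) (k : ℕ) : ℝ :=
  (m * n : ℝ) - (k : ℝ) * ((m + n : ℝ) - k) * (m * n : ℝ) / ((m + n : ℝ)) ^ 2 -
    Int.fract ((k * m : ℝ) / (m + n)) * Int.fract ((k * n : ℝ) / (m + n))

theorem pred_mul_mod_add_eq {m n k : ℕ} (hm : 0 < m) (hk : k + 1 = m + n) :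
    k * m % (m + n) = n := by
  obtain ⟨m, rfl⟩ := Nat.exists_eq_add_one_of_ne_zero hm.ne'
  obtain rfl : k = m + n := by omega
  rw [show (m + n) * (m + 1) = n + m * (m + 1 + n) by ring, Nat.add_mul_mod_self_right,
    Nat.mod_eq_of_lt (by omega)]

theorem add_mul_le_mul_add_mod_mul_mod {m n k j : ℕ} (hm : 0 < m) (hn : 0 < n)
    (hk : 1 ≤ k) (hj : 1 ≤ j) (hkj : k + j = m + n) :
    (m + n) * (m * n) ≤ k * j * (m * n) + k * m % (m + n) * (k * n % (m + n)) := by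
  rcases hk.eq_or_lt with rfl | hk
  · rw [one_mul, one_mul, Nat.mod_eq_of_lt (by omega), Nat.mod_eq_of_lt (by omega), ← hkj]
    apply le_of_eq; ring
  rcases hj.eq_or_lt with rfl | hj
  · have hkn := pred_mul_mod_add_eq hn (hkj.trans (add_comm m n))
    rw [add_comm n m] at hkn
    rw [pred_mul_mod_add_eq hm hkj, hkn, ← hkj]
    apply le_of_eq; ring
  · rw [← hkj]
    exact le_add_right (Nat.mul_le_mul_right _ (add_le_mul hk hj))

theorem fmn_eq_mod (m n k : ℕ) :
    fmn m n k = (m * n : ℝ) - k * ((m + n : ℝ) - k) * (m * n : ℝ) / (m + n : ℝ) ^ 2 -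
      ((k * m % (m + n) : ℕ) : ℝ) * ((k * n % (m + n) : ℕ) : ℝ) / (m + n : ℝ) ^ 2 := by
  have fract_eq (a : ℕ) :
      Int.fract ((k * a : ℝ) / (m + n)) = ((k * a % (m + n) : ℕ) : ℝ) / (m + n) := by
    simpa using Int.fract_div_natCast_eq_div_natCast_mod (k := ℝ) (m := k * a) (n := m + n)
  rw [fmn, fract_eq, fract_eq, div_mul_div_comm, ← sq]

/-- For all integers `1 ≤ k ≤ d-1`, `f_{m,n}(k) ≤ δ_{m,n} = mn(1 - 1/d)`. -/
theorem fmn_le_delta (m n : ℕ) (hm : 0 < m) (hn : 0 < n) (k : ℕ)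
    (hk1 : 1 ≤ k) (hk2 : k ≤ m + n - 1) :
    fmn m n k ≤ (m * n : ℝ) * (1 - 1 / (m + n)) := by
  obtain ⟨j, hkj⟩ : ∃ j, k + j = m + n := ⟨m + n - k, by omega⟩
  have key := add_mul_le_mul_add_mod_mul_mod hm hn hk1 (by omega) hkj
  have hj : (m + n : ℝ) - k = j := by rw [sub_eq_iff_eq_add']; exact_mod_cast hkj.symm
  have gap : (m * n : ℝ) * (1 - 1 / (m + n)) - fmn m n k =
      ((k * j * (m * n) + k * m % (m + n) * (k * n % (m + n)) : ℕ) - ((m + n) * (m * n) : ℕ) : ℝ) /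
        (m + n : ℝ) ^ 2 := by
    rw [fmn_eq_mod, hj]
    push_cast
    field_simp
    ring
  rw [← sub_nonneg, gap]
  exact div_nonneg (sub_nonneg.mpr (by exact_mod_cast key)) (by positivity)
end

section
/- Let Λ ⊂ ℝᵈ be a full-rank lattice, and let V_q be the span of the first q vectors of a Minkowski-reduced basis of Λ as in the previous lemma. Then for every Λ-rational q-dimensional subspace V'_q ≠ V_q, the covolume satisfies log‖V'_q‖ ≥ Σ_{i=1}^{q-1} log λᵢ(Λ) + log λ_{q+1}(Λ) - O(1), with implied constant depending only on d. -/
open scoped RealInnerProductSpace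

/-- The `i`-th successive minimum of a set `Λ ⊂ ℝᵈ`. -/
noncomputable def succMin {d : ℕ} (Λ : Set (EuclideanSpace ℝ (Fin d))) (i : ℕ) : ℝ :=
  sInf {l : ℝ | ∃ v : Fin i → EuclideanSpace ℝ (Fin d),
    (∀ j, v j ∈ Λ) ∧ (∀ j, ‖v j‖ ≤ l) ∧ LinearIndependent ℝ v}

/-- Covolume of the lattice spanned by `v` (square root of the Gram determinant). -/
noncomputable def gramCovol {d q : ℕ} (v : Fin q → EuclideanSpace ℝ (Fin d)) : ℝ :=
  Real.sqrt (Matrix.det (Matrix.of fun i j => (⟪v i, v j⟫ : ℝ)))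

/-!
Write `M` for the lattice spanned by `v`. A Korkine–Zolotarev type induction bounds the covolume
of `M` from below by `(√3/2)^(q²) λ₁(M) ⋯ λ_q(M)`: project orthogonally to a shortest vector `w`
of `M`, which can be taken as the first vector of a `ℤ`-basis; the covolume splits as `‖w‖` times
the covolume of the projected lattice, and every projected vector lifts to a vector of `M` whose
component along `w` is at most `‖w‖/2`, so `√3/2 · λᵢ₊₁(M)` is at most the `i`-th minimum of the
projected lattice. Since `M ⊆ Λ`, `λᵢ(Λ) ≤ λᵢ(M)`. For the last factor: either one of
`r₁, …, r_q` is at least as long as `λ_{q+1}(Λ)`, and then `λ_{q+1}(Λ) ≤ e^{C₀} λ_q(Λ)`; or all of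
them are shorter, and as `V'_q ≠ V_q` one of them lies outside `V'_q`, so that together with any
`q` independent vectors of `M` it gives `q + 1` independent vectors of `Λ`, whence
`λ_{q+1}(Λ) ≤ λ_q(M)`.
-/

open Submodule Set

theorem Submodule.span_range_eq_of_le_of_linearIndependent {K V ι : Type*} [DivisionRing K]
    [AddCommGroup V] [Module K V] [Fintype ι] {x y : ι → V} (hx : LinearIndependent K x)
    (h : span K (range x) ≤ span K (range y)) : span K (range x) = span K (range y) :=
  have := FiniteDimensional.span_of_finite K (finite_range y)
  eq_of_le_of_finrank_le h ((finrank_range_le_card y).trans (finrank_span_eq_card hx).ge)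

theorem LinearIndependent.finCons_of_map_eq_zero {K V V' : Type*} [DivisionRing K]
    [AddCommGroup V] [Module K V] [AddCommGroup V'] [Module K V'] {q : ℕ} {w : V}
    {x : Fin q → V} (hw : w ≠ 0) (f : V →ₗ[K] V') (hfw : f w = 0)
    (hx : LinearIndependent K (f ∘ x)) : LinearIndependent K (Fin.cons w x : Fin (q + 1) → V) :=
  linearIndependent_finCons.mpr ⟨hx.of_comp, fun hmem =>
    hw (disjoint_def.mp (range_ker_disjoint hx) w hmem hfw)⟩

theorem Module.Basis.exists_basis_mem_span_singleton {R M ι : Type*} [CommRing R] [IsDomain R]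
    [IsPrincipalIdealRing R] [AddCommGroup M] [Module R M] [Finite ι] (b : Basis ι R M)
    {c : M} (hc : c ≠ 0) : ∃ (B : Basis ι R M) (i : ι), c ∈ R ∙ B i := by
  obtain ⟨n, snf⟩ := (R ∙ c).smithNormalForm b
  have : Nontrivial (R ∙ c) := nontrivial_span_singleton hc
  obtain rfl : n = 1 := by
    have h1 : n ≤ 1 := by
      simpa [Module.finrank_eq_card_basis snf.bN] using finrank_span_le_card (R := R) {c}
    have h0 : 0 < n := Fin.pos_iff_nonempty.mpr snf.bN.index_nonempty
    omega
  refine ⟨snf.bM, snf.f 0, ?_⟩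
  have hcN : (⟨c, mem_span_singleton_self c⟩ : R ∙ c) ∈ R ∙ snf.bN 0 := by
    simpa [Set.range_unique] using snf.bN.mem_span ⟨c, mem_span_singleton_self c⟩
  obtain ⟨t, ht⟩ := mem_span_singleton.mp hcN
  refine mem_span_singleton.mpr ⟨t * snf.a 0, ?_⟩
  rw [mul_smul, ← snf.snf 0, ← Submodule.coe_smul, ht]

theorem Real.le_exp_mul_of_log_sub_log_le {x y c : ℝ} (hx : 0 < x) (hy : 0 < y)
    (h : Real.log x - Real.log y ≤ c) : x ≤ Real.exp c * y :=
  calc x = Real.exp (Real.log x) := (Real.exp_log hx).symm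
    _ ≤ Real.exp (c + Real.log y) := Real.exp_le_exp.mpr (by linarith)
    _ = Real.exp c * y := by rw [Real.exp_add, Real.exp_log hy]

section IntegerSpan

variable {F : Type*} [NormedAddCommGroup F] [NormedSpace ℝ F]

theorem LinearIndependent.of_span_int_eq {ι : Type*} [Fintype ι] {u v : ι → F}
    (hv : LinearIndependent ℝ v) (h : span ℤ (range u) = span ℤ (range v)) :
    LinearIndependent ℝ u := by
  rw [linearIndependent_iff_card_eq_finrank_span, Set.finrank, ← span_span_of_tower ℤ, h,
    span_span_of_tower, ← Set.finrank, ← linearIndependent_iff_card_eq_finrank_span]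
  exact hv

theorem exists_span_int_eq_and_mem_span_singleton {n : ℕ} {v : Fin (n + 1) → F}
    (hv : LinearIndependent ℝ v) {w : F} (hw : w ∈ span ℤ (range v)) (hw0 : w ≠ 0) :
    ∃ u : Fin (n + 1) → F, span ℤ (range u) = span ℤ (range v) ∧ w ∈ ℤ ∙ u 0 := by
  set M := span ℤ (range v)
  obtain ⟨B, i, hB⟩ := (Module.Basis.span (hv.restrict_scalars' ℤ)).exists_basis_mem_span_singleton
    (c := (⟨w, hw⟩ : M)) (by simpa using hw0)
  let B' := B.reindex (Equiv.swap i 0)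
  refine ⟨M.subtype ∘ B', ?_, ?_⟩
  · rw [range_comp, ← map_span, B'.span_eq, map_subtype_top]
  · obtain ⟨t, ht⟩ := mem_span_singleton.mp hB
    exact mem_span_singleton.mpr ⟨t, by simpa [B'] using congrArg Subtype.val ht⟩

theorem exists_ne_zero_forall_norm_le [FiniteDimensional ℝ F] {ι : Type*} [Nonempty ι]
    {v : ι → F} (hv : LinearIndependent ℝ v) :
    ∃ w ∈ span ℤ (range v), w ≠ 0 ∧ ∀ x ∈ span ℤ (range v), x ≠ 0 → ‖w‖ ≤ ‖x‖ := by
  obtain ⟨i⟩ := ‹Nonempty ι›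
  -- `span ℤ (range v)` lies in the discrete lattice spanned by a basis extending `v`.
  let B := Module.Basis.extend hv.linearIndepOn_id
  have := Module.Finite.finite_basis B
  have hvB : span ℤ (range v) ≤ span ℤ (range B) := by
    rw [Module.Basis.range_extend]
    exact span_mono (hv.linearIndepOn_id.subset_extend _)
  set S := (Metric.closedBall 0 ‖v i‖ ∩ (span ℤ (range v) : Set F)) \ {0}
  have hS : S.Finite :=
    ((ZSpan.setFinite_inter B Metric.isBounded_closedBall).subset
      (inter_subset_inter_right _ hvB)).sdiff
  have hvi : v i ∈ S := ⟨⟨by simp, subset_span (mem_range_self i)⟩, hv.ne_zero i⟩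
  obtain ⟨w, ⟨⟨-, hw⟩, hw0⟩, hmin⟩ := S.exists_min_image (‖·‖) hS ⟨_, hvi⟩
  refine ⟨w, hw, hw0, fun x hx hx0 => ?_⟩
  by_cases hxi : ‖x‖ ≤ ‖v i‖
  · exact hmin x ⟨⟨by simpa using hxi, hx⟩, hx0⟩
  · exact (hmin _ hvi).trans (not_le.mp hxi).le

theorem exists_linearIndependent_span_int_eq_forall_norm_le [FiniteDimensional ℝ F] {n : ℕ}
    {v : Fin (n + 1) → F} (hv : LinearIndependent ℝ v) :
    ∃ u : Fin (n + 1) → F, LinearIndependent ℝ u ∧ span ℤ (range u) = span ℤ (range v) ∧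
      ∀ x ∈ span ℤ (range v), x ≠ 0 → ‖u 0‖ ≤ ‖x‖ := by
  obtain ⟨w, hw, hw0, hmin⟩ := exists_ne_zero_forall_norm_le hv
  obtain ⟨u, hspan, hwu⟩ := exists_span_int_eq_and_mem_span_singleton hv hw hw0
  obtain ⟨t, rfl⟩ := mem_span_singleton.mp hwu
  have ht : (1 : ℝ) ≤ |(t : ℝ)| := by
    exact_mod_cast Int.one_le_abs (by rintro rfl; simp at hw0)
  refine ⟨u, hv.of_span_int_eq hspan, hspan, fun x hx hx0 => le_trans ?_ (hmin x hx hx0)⟩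
  rw [← Int.cast_smul_eq_zsmul ℝ, norm_smul, Real.norm_eq_abs]
  exact le_mul_of_one_le_left (norm_nonneg _) ht

end IntegerSpan

section Gram

variable {F : Type*} [NormedAddCommGroup F] [InnerProductSpace ℝ F]

open Matrix

theorem Matrix.gram_sum_smul {m n : Type*} [Fintype n] (A : Matrix m n ℝ) (v : n → F) :
    gram ℝ (fun i => ∑ k, A i k • v k) = A * gram ℝ v * Aᵀ := by
  ext i j
  simp only [gram_apply, mul_apply, transpose_apply, sum_inner, inner_sum, real_inner_smul_left,
    real_inner_smul_right, Finset.sum_mul]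
  exact Finset.sum_congr rfl fun _ _ => Finset.sum_congr rfl fun _ _ => by ring

theorem Matrix.gram_eq_intCast_mul_of_span_int_le {ι : Type*} [Fintype ι] {u v : ι → F}
    (h : span ℤ (range u) ≤ span ℤ (range v)) :
    ∃ A : Matrix ι ι ℤ, gram ℝ u = A.map (↑) * gram ℝ v * (A.map (↑))ᵀ := by
  choose A hA using fun i =>
    (mem_span_range_iff_exists_fun ℤ).mp (h (subset_span (mem_range_self i)))
  refine ⟨Matrix.of A, ?_⟩
  rw [← gram_sum_smul]
  congr with i
  simp [← hA i, Int.cast_smul_eq_zsmul]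

theorem Matrix.det_gram_eq_of_span_int_eq {ι : Type*} [Fintype ι] [DecidableEq ι] {u v : ι → F}
    (hv : LinearIndependent ℝ v) (h : span ℤ (range u) = span ℤ (range v)) :
    (gram ℝ u).det = (gram ℝ v).det := by
  obtain ⟨A, hA⟩ := gram_eq_intCast_mul_of_span_int_le h.le
  obtain ⟨B, hB⟩ := gram_eq_intCast_mul_of_span_int_le h.ge
  have hdet_u : (gram ℝ u).det = (A.det : ℝ) ^ 2 * (gram ℝ v).det := by
    rw [hA, det_mul, det_mul, det_transpose, Int.cast_det]; ring
  have hdet_v : (gram ℝ v).det = (B.det : ℝ) ^ 2 * (gram ℝ u).det := by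
    rw [hB, det_mul, det_mul, det_transpose, Int.cast_det]; ring
  -- As `(gram ℝ v).det ≠ 0`, the integer `A.det` divides `1`.
  have hunit : A.det * (A.det * B.det ^ 2) = 1 := by
    have h0 := (det_gram_ne_zero_iff_linearIndependent (𝕜 := ℝ)).mpr hv
    have : ((A.det * (A.det * B.det ^ 2) : ℤ) : ℝ) * (gram ℝ v).det = 1 * (gram ℝ v).det := by
      rw [Int.cast_mul, Int.cast_mul, Int.cast_pow]
      linear_combination -hdet_v - (B.det : ℝ) ^ 2 * hdet_u
    exact_mod_cast mul_right_cancel₀ h0 this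
  have hA1 : (A.det : ℝ) ^ 2 = 1 := by
    exact_mod_cast (sq A.det).trans (Int.isUnit_mul_self (IsUnit.of_mul_eq_one _ hunit))
  rw [hdet_u, hA1, one_mul]

theorem Matrix.det_gram_add_smul_self {ι : Type*} [Fintype ι] [DecidableEq ι] (z : ι → F)
    {i₀ : ι} {c : ι → ℝ} (hc : c i₀ = 0) :
    (gram ℝ fun i => z i + c i • z i₀).det = (gram ℝ z).det := by
  set T : Matrix ι ι ℝ := 1 + replicateCol (Fin 1) c * replicateRow (Fin 1) (Pi.single i₀ (1 : ℝ))
  have hT : T.det = 1 := (det_one_add_replicateCol_mul_replicateRow c _).trans (by simp [hc])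
  have hz : (fun i => z i + c i • z i₀) = fun i => ∑ k, T i k • z k := by
    ext i
    simp [T, add_smul, Finset.sum_add_distrib, one_apply, mul_apply, Pi.single_apply]
  rw [hz, gram_sum_smul, det_mul, det_mul, det_transpose, hT, one_mul, mul_one]

theorem Matrix.det_gram_cons_of_inner_eq_zero {q : ℕ} {w : F} {y : Fin q → F}
    (h : ∀ j, ⟪w, y j⟫ = 0) :
    (gram ℝ (Fin.cons w y : Fin (q + 1) → F)).det = ‖w‖ ^ 2 * (gram ℝ y).det := by
  rw [det_succ_row_zero, Fin.sum_univ_succ, Finset.sum_eq_zero fun j _ => by simp [h j]]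
  have hsub : (gram ℝ (Fin.cons w y : Fin (q + 1) → F)).submatrix Fin.succ Fin.succ =
      gram ℝ y := by
    ext; simp
  simp [hsub]

theorem Matrix.det_gram_eq_norm_sq_mul_det_gram_starProjection {q : ℕ} (u : Fin (q + 1) → F) :
    (gram ℝ u).det =
      ‖u 0‖ ^ 2 * (gram ℝ fun j : Fin q => (ℝ ∙ u 0)ᗮ.starProjection (u j.succ)).det := by
  set P := (ℝ ∙ u 0)ᗮ.starProjection
  set c : Fin (q + 1) → ℝ := Fin.cons 0 fun j => ⟪u 0, u j.succ⟫ / ‖u 0‖ ^ 2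
  set z : Fin (q + 1) → F := Fin.cons (u 0) fun j => P (u j.succ)
  have hu : u = fun i => z i + c i • z 0 := by
    ext i
    refine Fin.cases ?_ (fun j => ?_) i
    · simp [z, c]
    · simp [z, c, P, starProjection_singleton]
  conv_lhs => rw [hu]
  rw [det_gram_add_smul_self z (Fin.cons_zero _ _), det_gram_cons_of_inner_eq_zero fun j =>
    mem_orthogonal_singleton_iff_inner_right.mp (starProjection_apply_mem _ _)]

end Gram

section OrthogonalProjection

variable {F : Type*} [NormedAddCommGroup F] [InnerProductSpace ℝ F]

theorem LinearIndependent.starProjection_orthogonal_tail {q : ℕ} {u : Fin (q + 1) → F}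
    (hu : LinearIndependent ℝ u) :
    LinearIndependent ℝ fun j : Fin q => (ℝ ∙ u 0)ᗮ.starProjection (u j.succ) := by
  rw [← Fin.cons_self_tail u, linearIndependent_finCons] at hu
  refine hu.1.map (f := ((ℝ ∙ u 0)ᗮ.starProjection : F →ₗ[ℝ] F)) ?_
  rw [ker_starProjection, orthogonal_orthogonal, disjoint_span_singleton]
  exact fun h => absurd h hu.2

theorem exists_norm_sub_zsmul_sq_le (w y : F) :
    ∃ k : ℤ, ‖y - k • w‖ ^ 2 ≤ ‖(ℝ ∙ w)ᗮ.starProjection y‖ ^ 2 + ‖w‖ ^ 2 / 4 := by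
  set a := ⟪w, y⟫ / ‖w‖ ^ 2
  refine ⟨round a, ?_⟩
  have hQ : (ℝ ∙ w).starProjection (y - round a • w) = (a - round a) • w := by
    rw [map_sub, map_zsmul, starProjection_eq_self_iff.mpr (mem_span_singleton_self w),
      starProjection_singleton, sub_smul, Int.cast_smul_eq_zsmul]
    simp [a]
  have hP : (ℝ ∙ w)ᗮ.starProjection (y - round a • w) = (ℝ ∙ w)ᗮ.starProjection y := by
    rw [map_sub, map_zsmul, starProjection_orthogonalComplement_singleton_eq_zero, smul_zero,
      sub_zero]
  have ha : (a - round a) ^ 2 ≤ 1 / 4 := by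
    have := abs_sub_round a
    nlinarith [abs_nonneg (a - round a), sq_abs (a - round a)]
  rw [norm_sq_eq_add_norm_sq_starProjection _ (ℝ ∙ w), hQ, hP, norm_smul, mul_pow,
    Real.norm_eq_abs, sq_abs]
  nlinarith [sq_nonneg ‖w‖]

theorem exists_mem_span_int_starProjection_eq {q : ℕ} (u : Fin (q + 1) → F) {z : F}
    (hz : z ∈ span ℤ (range fun j : Fin q => (ℝ ∙ u 0)ᗮ.starProjection (u j.succ))) :
    ∃ x ∈ span ℤ (range u), (ℝ ∙ u 0)ᗮ.starProjection x = z ∧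
      ‖x‖ ^ 2 ≤ ‖z‖ ^ 2 + ‖u 0‖ ^ 2 / 4 := by
  set P := (ℝ ∙ u 0)ᗮ.starProjection
  obtain ⟨c, rfl⟩ := (mem_span_range_iff_exists_fun ℤ).mp hz
  set y := ∑ j, c j • u j.succ
  have hPy : P y = ∑ j, c j • P (u j.succ) := by simp [y, map_sum, map_zsmul]
  have hy : y ∈ span ℤ (range u) :=
    sum_mem fun j _ => zsmul_mem (subset_span (mem_range_self _)) _
  obtain ⟨k, hk⟩ := exists_norm_sub_zsmul_sq_le (u 0) y
  refine ⟨y - k • u 0, sub_mem hy (zsmul_mem (subset_span (mem_range_self 0)) k), ?_, ?_⟩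
  · rw [map_sub, map_zsmul, starProjection_orthogonalComplement_singleton_eq_zero, smul_zero,
      sub_zero, hPy]
  · rwa [← hPy]

end OrthogonalProjection

section SuccessiveMinima

variable {d : ℕ}

local notation "E" => EuclideanSpace ℝ (Fin d)

theorem gramCovol_eq_sqrt_det_gram {q : ℕ} (v : Fin q → E) :
    gramCovol v = √(Matrix.gram ℝ v).det := rfl

theorem succMin_nonneg (Λ : Set E) {k : ℕ} (hk : 0 < k) : 0 ≤ succMin Λ k :=
  Real.sInf_nonneg fun _ ⟨_, _, hv, _⟩ => (norm_nonneg _).trans (hv ⟨0, hk⟩)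

theorem succMin_le {Λ : Set E} {k : ℕ} (hk : 0 < k) {v : Fin k → E} (hvΛ : ∀ j, v j ∈ Λ)
    (hv : LinearIndependent ℝ v) {l : ℝ} (hl : ∀ j, ‖v j‖ ≤ l) : succMin Λ k ≤ l :=
  csInf_le ⟨0, fun _ ⟨_, _, hv', _⟩ => (norm_nonneg _).trans (hv' ⟨0, hk⟩)⟩ ⟨v, hvΛ, hl, hv⟩

theorem le_succMin {Λ : Set E} {k : ℕ} {c : ℝ}
    (hΛ : ∃ v : Fin k → E, (∀ j, v j ∈ Λ) ∧ LinearIndependent ℝ v)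
    (h : ∀ (v : Fin k → E) (l : ℝ), (∀ j, v j ∈ Λ) → LinearIndependent ℝ v →
      (∀ j, ‖v j‖ ≤ l) → c ≤ l) :
    c ≤ succMin Λ k := by
  obtain ⟨v, hvΛ, hv⟩ := hΛ
  refine le_csInf ⟨∑ j, ‖v j‖, v, hvΛ, fun j => ?_, hv⟩ fun l ⟨v, hvΛ, hl, hv⟩ => h v l hvΛ hv hl
  exact Finset.single_le_sum (fun j _ => norm_nonneg (v j)) (Finset.mem_univ j)

theorem succMin_le_succMin {Λ M : Set E} (hMΛ : M ⊆ Λ) {k m : ℕ} (hk : 0 < k) (hkm : k ≤ m)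
    (hM : ∃ v : Fin m → E, (∀ j, v j ∈ M) ∧ LinearIndependent ℝ v) :
    succMin Λ k ≤ succMin M m :=
  le_succMin hM fun _ _ hvM hv hl => succMin_le hk (fun _ => hMΛ (hvM _))
    (hv.comp _ (Fin.castLE_injective hkm)) fun _ => hl _

theorem LinearIndependent.exists_fin_mem_span_int {n k : ℕ} {b : Fin n → E}
    (hb : LinearIndependent ℝ b) (hkn : k ≤ n) :
    ∃ v : Fin k → E, (∀ j, v j ∈ (span ℤ (range b) : Set E)) ∧ LinearIndependent ℝ v :=
  ⟨b ∘ Fin.castLE hkn, fun _ => subset_span (mem_range_self _),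
    hb.comp _ (Fin.castLE_injective hkn)⟩

theorem norm_le_succMin {Λ : Set E} {w : E} (hw : ∀ x ∈ Λ, x ≠ 0 → ‖w‖ ≤ ‖x‖) {k : ℕ}
    (hk : 0 < k) (hΛ : ∃ v : Fin k → E, (∀ j, v j ∈ Λ) ∧ LinearIndependent ℝ v) :
    ‖w‖ ≤ succMin Λ k :=
  le_succMin hΛ fun _ _ hvΛ hv hl => (hw _ (hvΛ ⟨0, hk⟩) (hv.ne_zero _)).trans (hl _)

theorem succMin_pos {n k : ℕ} {b : Fin n → E} (hb : LinearIndependent ℝ b) (hk : 0 < k)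
    (hkn : k ≤ n) : 0 < succMin (span ℤ (range b) : Set E) k := by
  have : Nonempty (Fin n) := ⟨⟨0, by omega⟩⟩
  obtain ⟨w, -, hw0, hw⟩ := exists_ne_zero_forall_norm_le hb
  exact (norm_pos_iff.mpr hw0).trans_le (norm_le_succMin hw hk (hb.exists_fin_mem_span_int hkn))

theorem sqrt_three_div_two_mul_succMin_le {q : ℕ} {u : Fin (q + 1) → E}
    (hu : LinearIndependent ℝ u) (hshort : ∀ x ∈ span ℤ (range u), x ≠ 0 → ‖u 0‖ ≤ ‖x‖)
    {i : ℕ} (hi : 0 < i) (hiq : i ≤ q) :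
    √3 / 2 * succMin (span ℤ (range u) : Set E) (i + 1) ≤
      succMin (span ℤ (range fun j : Fin q => (ℝ ∙ u 0)ᗮ.starProjection (u j.succ)) : Set E) i := by
  set P := (ℝ ∙ u 0)ᗮ.starProjection
  set L := (span ℤ (range u) : Set E)
  refine le_succMin (hu.starProjection_orthogonal_tail.exists_fin_mem_span_int hiq) ?_
  intro z l hz hz_indep hzl
  have hl : 0 ≤ l := (norm_nonneg _).trans (hzl ⟨0, hi⟩)
  choose x hxL hPx hx using fun j => exists_mem_span_int_starProjection_eq u (hz j)
  have hx' : ∀ j, ‖x j‖ ^ 2 ≤ l ^ 2 + ‖u 0‖ ^ 2 / 4 := fun j =>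
    (hx j).trans (by gcongr; exact hzl j)
  have hx0 : x ⟨0, hi⟩ ≠ 0 := fun h0 => hz_indep.ne_zero ⟨0, hi⟩ (by rw [← hPx, h0, map_zero])
  -- i.e. `‖u 0‖² ≤ 4 l² / 3`: this is where the constant `√3 / 2` comes from.
  have hw : ‖u 0‖ ^ 2 ≤ l ^ 2 + ‖u 0‖ ^ 2 / 4 :=
    (pow_le_pow_left₀ (norm_nonneg _) (hshort _ (hxL _) hx0) 2).trans (hx' _)
  have hcons : LinearIndependent ℝ (Fin.cons (u 0) x : Fin (i + 1) → E) :=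
    .finCons_of_map_eq_zero (hu.ne_zero 0) (P : E →ₗ[ℝ] E)
      (starProjection_orthogonalComplement_singleton_eq_zero _)
      (by rwa [show ⇑(P : E →ₗ[ℝ] E) ∘ x = z from funext hPx])
  have hmin : succMin L (i + 1) ≤ √(l ^ 2 + ‖u 0‖ ^ 2 / 4) := by
    refine succMin_le i.succ_pos (Fin.forall_fin_succ.mpr ⟨?_, fun j => ?_⟩) hcons
      (Fin.forall_fin_succ.mpr ⟨?_, fun j => ?_⟩)
    · exact subset_span (mem_range_self 0)
    · exact hxL j
    · simpa using Real.le_sqrt_of_sq_le hw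
    · simpa using Real.le_sqrt_of_sq_le (hx' j)
  have hmin0 := succMin_nonneg L i.succ_pos
  have hsq : (√3 / 2 * succMin L (i + 1)) ^ 2 ≤ l ^ 2 := by
    rw [mul_pow, div_pow, Real.sq_sqrt zero_le_three]
    nlinarith [Real.sq_sqrt (show 0 ≤ l ^ 2 + ‖u 0‖ ^ 2 / 4 by positivity),
      pow_le_pow_left₀ hmin0 hmin 2]
  exact (pow_le_pow_iff_left₀ (by positivity) hl two_ne_zero).mp hsq

theorem pow_mul_prod_succMin_le_gramCovol {q : ℕ} {v : Fin q → E} (hv : LinearIndependent ℝ v) :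
    (√3 / 2) ^ (q * q) * ∏ i ∈ Finset.range q, succMin (span ℤ (range v) : Set E) (i + 1) ≤
      gramCovol v := by
  induction q with
  | zero => simp [gramCovol_eq_sqrt_det_gram]
  | succ q ih =>
    obtain ⟨u, hu, hspan, hshort⟩ := exists_linearIndependent_span_int_eq_forall_norm_le hv
    rw [← hspan] at hshort ⊢
    set a := √3 / 2
    set g := fun j : Fin q => (ℝ ∙ u 0)ᗮ.starProjection (u j.succ)
    set L := (span ℤ (range u) : Set E)
    set p := ∏ i ∈ Finset.range q, succMin L (i + 2)
    set pg := ∏ i ∈ Finset.range q, succMin (span ℤ (range g) : Set E) (i + 1)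
    have hcov : gramCovol v = ‖u 0‖ * gramCovol g := by
      rw [gramCovol_eq_sqrt_det_gram, gramCovol_eq_sqrt_det_gram,
        ← Matrix.det_gram_eq_of_span_int_eq hv hspan,
        Matrix.det_gram_eq_norm_sq_mul_det_gram_starProjection, Real.sqrt_mul (sq_nonneg _),
        Real.sqrt_sq (norm_nonneg _)]
    have h₁ : succMin L 1 ≤ ‖u 0‖ :=
      succMin_le one_pos (fun _ => subset_span (mem_range_self 0))
        (linearIndependent_unique_iff.mpr (hu.ne_zero 0)) fun _ => le_rfl
    have hstep : a ^ q * p ≤ pg := by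
      rw [← Finset.card_range q, ← Finset.prod_const, ← Finset.prod_mul_distrib]
      refine Finset.prod_le_prod
        (fun i _ => mul_nonneg (by positivity) (succMin_nonneg L (by omega))) fun i hi => ?_
      exact sqrt_three_div_two_mul_succMin_le hu hshort i.succ_pos (Finset.mem_range.mp hi)
    have hpow : a ^ ((q + 1) * (q + 1)) ≤ a ^ (q * q) * a ^ q := by
      rw [← pow_add]
      refine pow_le_pow_of_le_one (by positivity) ?_ (by nlinarith)
      rw [div_le_one two_pos, Real.sqrt_le_left] <;> norm_num
    have hp : 0 ≤ p := Finset.prod_nonneg fun i _ => succMin_nonneg L (by omega)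
    have hpg : 0 ≤ pg := Finset.prod_nonneg fun i _ => succMin_nonneg _ i.succ_pos
    have hm₁ : 0 ≤ succMin L 1 := succMin_nonneg L one_pos
    calc a ^ ((q + 1) * (q + 1)) * ∏ i ∈ Finset.range (q + 1), succMin L (i + 1)
        = a ^ ((q + 1) * (q + 1)) * (p * succMin L 1) := by rw [Finset.prod_range_succ']
      _ ≤ a ^ (q * q) * a ^ q * (p * succMin L 1) := by gcongr
      _ = a ^ (q * q) * (a ^ q * p) * succMin L 1 := by ring
      _ ≤ a ^ (q * q) * pg * ‖u 0‖ := by gcongr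
      _ ≤ gramCovol g * ‖u 0‖ := by gcongr; exact ih hu.starProjection_orthogonal_tail
      _ = gramCovol v := by rw [hcov, mul_comm]

theorem sum_log_succMin_add_le_log_gramCovol {q : ℕ} {v : Fin q → E}
    (hv : LinearIndependent ℝ v) :
    ∑ i ∈ Finset.range q, Real.log (succMin (span ℤ (range v) : Set E) (i + 1)) +
      q * q * Real.log (√3 / 2) ≤ Real.log (gramCovol v) := by
  have hpos : ∀ i ∈ Finset.range q, 0 < succMin (span ℤ (range v) : Set E) (i + 1) :=
    fun i hi => succMin_pos hv i.succ_pos (Finset.mem_range.mp hi)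
  have h := Real.log_le_log (by have := Finset.prod_pos hpos; positivity)
    (pow_mul_prod_succMin_le_gramCovol hv)
  rw [Real.log_mul (by positivity) (Finset.prod_pos hpos).ne', Real.log_pow,
    Real.log_prod fun i hi => (hpos i hi).ne'] at h
  push_cast at h
  linarith

theorem succMin_succ_le_succMin_of_span_ne (Λ : Submodule ℤ E) {q : ℕ} {r v : Fin q → E}
    (hrΛ : ∀ j, r j ∈ Λ) (hr : LinearIndependent ℝ r)
    (hr_lt : ∀ j, ‖r j‖ < succMin (Λ : Set E) (q + 1)) (hvΛ : ∀ j, v j ∈ Λ)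
    (hv : LinearIndependent ℝ v) (hne : span ℝ (range v) ≠ span ℝ (range r)) :
    succMin (Λ : Set E) (q + 1) ≤ succMin (span ℤ (range v) : Set E) q := by
  obtain ⟨j₀, hj₀⟩ : ∃ j, r j ∉ span ℝ (range v) := by
    by_contra! h
    exact hne (span_range_eq_of_le_of_linearIndependent hr
      (span_le.mpr (range_subset_iff.mpr h))).symm
  refine le_succMin ⟨v, fun j => subset_span (mem_range_self j), hv⟩ fun x l hxM hx hl => ?_
  have hxv : span ℝ (range x) = span ℝ (range v) :=
    span_range_eq_of_le_of_linearIndependent hx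
      (span_le.mpr (range_subset_iff.mpr fun j => span_le_restrictScalars ℤ ℝ _ (hxM j)))
  have hcons : LinearIndependent ℝ (Fin.cons (r j₀) x : Fin (q + 1) → E) :=
    linearIndependent_finCons.mpr ⟨hx, by rwa [hxv]⟩
  have hMΛ : span ℤ (range v) ≤ Λ := span_le.mpr (range_subset_iff.mpr hvΛ)
  have := succMin_le q.succ_pos (Fin.forall_fin_succ.mpr ⟨hrΛ j₀, fun j => hMΛ (hxM j)⟩) hcons
    (l := max ‖r j₀‖ l) (Fin.forall_fin_succ.mpr ⟨by simp, fun j => by simpa using Or.inr (hl j)⟩)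
  exact (le_max_iff.mp this).resolve_left (not_le.mpr (hr_lt j₀))

theorem succMin_succ_le_exp_abs_mul (Λ : Submodule ℤ E) {q : ℕ} {r v : Fin q → E}
    (hrΛ : ∀ j, r j ∈ Λ) (hr : LinearIndependent ℝ r) {C : ℝ}
    (hrC : ∀ j : Fin q, ‖r j‖ ≤ Real.exp C * succMin (Λ : Set E) (j + 1)) (hvΛ : ∀ j, v j ∈ Λ)
    (hv : LinearIndependent ℝ v) (hne : span ℝ (range v) ≠ span ℝ (range r)) :
    succMin (Λ : Set E) (q + 1) ≤ Real.exp |C| * succMin (span ℤ (range v) : Set E) q := by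
  have hMΛ : (span ℤ (range v) : Set E) ⊆ Λ := span_le.mpr (range_subset_iff.mpr hvΛ)
  have hq : 0 < q := Nat.pos_of_ne_zero fun h => hne (by subst h; simp)
  by_cases h : ∀ j, ‖r j‖ < succMin (Λ : Set E) (q + 1)
  · exact (succMin_succ_le_succMin_of_span_ne Λ hrΛ hr h hvΛ hv hne).trans
      (le_mul_of_one_le_left (succMin_nonneg _ hq) (Real.one_le_exp (abs_nonneg C)))
  obtain ⟨j, hj⟩ := not_forall.mp h
  calc succMin (Λ : Set E) (q + 1) ≤ Real.exp C * succMin (Λ : Set E) (j + 1) :=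
        (not_lt.mp hj).trans (hrC j)
    _ ≤ Real.exp |C| * succMin (span ℤ (range v) : Set E) q := by
      gcongr
      · exact succMin_nonneg _ j.succ_pos
      · exact le_abs_self C
      · exact succMin_le_succMin hMΛ j.succ_pos j.isLt
          ⟨v, fun j => subset_span (mem_range_self j), hv⟩

theorem log_succMin_succ_le_log_succMin_add_abs {n q : ℕ} {b : Fin n → E}
    (hb : LinearIndependent ℝ b) (hqn : q + 1 ≤ n) {r v : Fin q → E}
    (hrΛ : ∀ j, r j ∈ span ℤ (range b)) (hr : LinearIndependent ℝ r) {C : ℝ}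
    (hrC : ∀ j : Fin q,
      |Real.log ‖r j‖ - Real.log (succMin (span ℤ (range b) : Set E) (j + 1))| ≤ C)
    (hvΛ : ∀ j, v j ∈ span ℤ (range b)) (hv : LinearIndependent ℝ v)
    (hne : span ℝ (range v) ≠ span ℝ (range r)) :
    Real.log (succMin (span ℤ (range b) : Set E) (q + 1)) ≤
      Real.log (succMin (span ℤ (range v) : Set E) q) + |C| := by
  have hq : 0 < q := Nat.pos_of_ne_zero fun h => hne (by subst h; simp)
  have h := succMin_succ_le_exp_abs_mul _ hrΛ hr (fun j => Real.le_exp_mul_of_log_sub_log_le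
    (norm_pos_iff.mpr (hr.ne_zero j)) (succMin_pos hb j.succ_pos (by omega)) (abs_le.mp (hrC j)).2)
    hvΛ hv hne
  calc _ ≤ Real.log (Real.exp |C| * succMin (span ℤ (range v) : Set E) q) :=
        Real.log_le_log (succMin_pos hb q.succ_pos hqn) h
    _ = _ := by
        rw [Real.log_mul (Real.exp_pos _).ne' (succMin_pos hv hq le_rfl).ne', Real.log_exp,
          add_comm]

end SuccessiveMinima

theorem rational_subspace_covolume_lower_bound_general (d : ℕ) (C₀ : ℝ) :
    ∃ C : ℝ, 0 < C ∧ ∀ b : Module.Basis (Fin d) ℝ (EuclideanSpace ℝ (Fin d)),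
      ∀ r : Fin d → EuclideanSpace ℝ (Fin d),
        (∀ i, r i ∈ Submodule.span ℤ (Set.range ⇑b)) →
        LinearIndependent ℝ r →
        Submodule.span ℤ (Set.range r) = Submodule.span ℤ (Set.range ⇑b) →
        (∀ i : Fin d,
          |Real.log ‖r i‖ -
            Real.log (succMin (Submodule.span ℤ (Set.range ⇑b) :
              Set (EuclideanSpace ℝ (Fin d))) ((i : ℕ) + 1))| ≤ C₀) →
        ∀ q : ℕ, 1 ≤ q → ∀ hq : q + 1 ≤ d,
          ∀ v : Fin q → EuclideanSpace ℝ (Fin d),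
            (∀ i, v i ∈ Submodule.span ℤ (Set.range ⇑b)) →
            LinearIndependent ℝ v →
            (Submodule.span ℤ (Set.range v) =
              Submodule.span ℤ (Set.range ⇑b) ⊓
                (Submodule.span ℝ (Set.range v)).restrictScalars ℤ) →
            (Submodule.span ℝ (Set.range v) ≠
              Submodule.span ℝ (Set.range fun i : Fin q => r (Fin.castLE (Nat.le_of_succ_le hq) i))) →
            (∑ i ∈ Finset.range (q - 1),
                Real.log (succMin (Submodule.span ℤ (Set.range ⇑b) :
                  Set (EuclideanSpace ℝ (Fin d))) (i + 1))) +
              Real.log (succMin (Submodule.span ℤ (Set.range ⇑b) :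
                Set (EuclideanSpace ℝ (Fin d))) (q + 1)) - C ≤
              Real.log (gramCovol v) := by
  have hlog : Real.log (√3 / 2) ≤ 0 :=
    Real.log_nonpos (by positivity) (by rw [div_le_one two_pos, Real.sqrt_le_left] <;> norm_num)
  refine ⟨|C₀| - d * d * Real.log (√3 / 2) + 1, by nlinarith [abs_nonneg C₀], ?_⟩
  intro b r hrΛ hr _ hrC₀ q hq1 hq v hvΛ hv _ hne
  obtain ⟨t, rfl⟩ : ∃ t, q = t + 1 := ⟨q - 1, by omega⟩
  have hlast := log_succMin_succ_le_log_succMin_add_abs b.linearIndependent hq (fun j => hrΛ _)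
    (hr.comp _ (Fin.castLE_injective _)) (fun j => hrC₀ _) hvΛ hv hne
  have hfirst : ∀ i ∈ Finset.range t,
      Real.log (succMin (span ℤ (range ⇑b) : Set (EuclideanSpace ℝ (Fin d))) (i + 1)) ≤
        Real.log (succMin (span ℤ (range v) : Set (EuclideanSpace ℝ (Fin d))) (i + 1)) := by
    intro i hi
    have hi : i < t := Finset.mem_range.mp hi
    exact Real.log_le_log (succMin_pos b.linearIndependent i.succ_pos (by omega))
      (succMin_le_succMin (span_le.mpr (range_subset_iff.mpr hvΛ)) i.succ_pos le_rfl
        (hv.exists_fin_mem_span_int (by omega)))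
  have hcov := sum_log_succMin_add_le_log_gramCovol hv
  rw [Finset.sum_range_succ] at hcov
  have hqd : ((t + 1 : ℕ) : ℝ) * (t + 1 : ℕ) ≤ d * d := by
    have : ((t + 1 : ℕ) : ℝ) ≤ d := by exact_mod_cast Nat.le_of_succ_le hq
    nlinarith
  rw [Nat.add_sub_cancel]
  linarith [Finset.sum_le_sum hfirst, mul_le_mul_of_nonpos_right hqd hlog]

/-- Let `Λ ⊂ ℝᵈ` be a full-rank lattice, and `V_q` the span of the first `q` vectors of a
basis `r` of `Λ` satisfying the Minkowski estimates `log‖rᵢ‖ = log λᵢ(Λ) + O(1)`. Then for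
every `Λ`-rational `q`-dimensional subspace `V'_q ≠ V_q` (given by a `ℤ`-basis `v` of
`V'_q ∩ Λ`), the covolume satisfies
`log‖V'_q‖ ≥ Σ_{i=1}^{q-1} log λᵢ(Λ) + log λ_{q+1}(Λ) - O(1)`, with implied constant
depending only on `d` (and the Minkowski constant `C₀`). -/
theorem rational_subspace_covolume_lower_bound (d : ℕ) (hd : 0 < d) (C₀ : ℝ) (hC₀ : 0 < C₀) :
    ∃ C : ℝ, 0 < C ∧ ∀ b : Module.Basis (Fin d) ℝ (EuclideanSpace ℝ (Fin d)),
      ∀ r : Fin d → EuclideanSpace ℝ (Fin d),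
        (∀ i, r i ∈ Submodule.span ℤ (Set.range ⇑b)) →
        LinearIndependent ℝ r →
        Submodule.span ℤ (Set.range r) = Submodule.span ℤ (Set.range ⇑b) →
        (∀ i : Fin d,
          |Real.log ‖r i‖ -
            Real.log (succMin (Submodule.span ℤ (Set.range ⇑b) :
              Set (EuclideanSpace ℝ (Fin d))) ((i : ℕ) + 1))| ≤ C₀) →
        ∀ q : ℕ, 1 ≤ q → ∀ hq : q + 1 ≤ d,
          ∀ v : Fin q → EuclideanSpace ℝ (Fin d),
            (∀ i, v i ∈ Submodule.span ℤ (Set.range ⇑b)) →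
            LinearIndependent ℝ v →
            (Submodule.span ℤ (Set.range v) =
              Submodule.span ℤ (Set.range ⇑b) ⊓
                (Submodule.span ℝ (Set.range v)).restrictScalars ℤ) →
            (Submodule.span ℝ (Set.range v) ≠
              Submodule.span ℝ (Set.range fun i : Fin q => r (Fin.castLE (Nat.le_of_succ_le hq) i))) →
            (∑ i ∈ Finset.range (q - 1),
                Real.log (succMin (Submodule.span ℤ (Set.range ⇑b) :
                  Set (EuclideanSpace ℝ (Fin d))) (i + 1))) +
              Real.log (succMin (Submodule.span ℤ (Set.range ⇑b) :
                Set (EuclideanSpace ℝ (Fin d))) (q + 1)) - C ≤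
              Real.log (gramCovol v) :=
  rational_subspace_covolume_lower_bound_general d C₀
end

section
/- A matrix A ∈ M_{m×n}(ℝ) is very singular (i.e. ω̂(A) > n/m) if and only if τ̂(A) := liminf_{t→∞} (-1/t) log λ₁(g_t u_A ℤᵈ) > 0; moreover τ̂(A) and ω = ω̂(A) are related by τ̂(A) = (1/n)·(ω - n/m)/(ω + 1). -/
open Filter

/-- The lattice vector `g_t u_A (p,q) = (e^{t/m}(Aq + p), e^{-t/n} q)` in
`ℝᵐ × ℝⁿ` (with the max norm). -/
noncomputable def gtuAVec (m n : ℕ) (A : Matrix (Fin m) (Fin n) ℝ) (t : ℝ)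
    (p : Fin m → ℤ) (q : Fin n → ℤ) : (Fin m → ℝ) × (Fin n → ℝ) :=
  (fun i => Real.exp (t / m) * ((p i : ℝ) + ∑ j, A i j * (q j : ℝ)),
   fun j => Real.exp (-t / n) * (q j : ℝ))

/-- The first successive minimum `λ₁(g_t u_A ℤᵈ)`: the infimum of the norms of the
nonzero lattice vectors. -/
noncomputable def lambdaOne (m n : ℕ) (A : Matrix (Fin m) (Fin n) ℝ) (t : ℝ) : ℝ :=
  sInf {r : ℝ | ∃ p : Fin m → ℤ, ∃ q : Fin n → ℤ, ¬(p = 0 ∧ q = 0) ∧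
    r = ‖gtuAVec m n A t p q‖}

/-- The uniform dynamical exponent `τ̂(A) = liminf_{t→∞} (-1/t) log λ₁(g_t u_A ℤᵈ)`. -/
noncomputable def tauHat (m n : ℕ) (A : Matrix (Fin m) (Fin n) ℝ) : ℝ :=
  liminf (fun t : ℝ => -Real.log (lambdaOne m n A t) / t) atTop

/-- The property defining the uniform exponent of irrationality: for all sufficiently
large `Q` there are integer vectors `p ∈ ℤᵐ`, `q ∈ ℤⁿ` with `‖Aq + p‖ ≤ Q^{-ω}` and
`0 < ‖q‖ ≤ Q`.  `ω̂(A)` is the supremum of the `ω` satisfying this property. -/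
def uniformApprox (m n : ℕ) (A : Matrix (Fin m) (Fin n) ℝ) (ω : ℝ) : Prop :=
  ∀ᶠ Q : ℝ in atTop, ∃ p : Fin m → ℤ, ∃ q : Fin n → ℤ, q ≠ 0 ∧
    ‖(fun j => (q j : ℝ) : Fin n → ℝ)‖ ≤ Q ∧
    ‖(fun i => (∑ j, A i j * (q j : ℝ)) + (p i : ℝ) : Fin m → ℝ)‖ ≤ Q ^ (-ω)

/-! Put `Q = e^{(1/n - τ) t}` and `ω = (1/m + τ)/(1/n - τ)`. Then `‖q‖ ≤ Q` and `‖Aq + p‖ ≤ Q^{-ω}`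
say exactly that `‖g_t u_A (p, q)‖ ≤ e^{-τ t}`, and for `τ > -1/m` a lattice vector that short
has `q ≠ 0`. So `τ < τ̂` makes `ω` a uniform exponent, and a uniform exponent `ω` gives `τ ≤ τ̂`.
The map `τ ↦ ω` is an increasing bijection `(-∞, 1/n) → (-1, ∞)` sending `0` to `n/m`, with
inverse `ω ↦ (1/n)(ω - n/m)/(ω + 1)`; this gives the equivalence, and the formula for `τ̂` at
`ω = ω̂` follows by continuity of the inverse. -/

noncomputable def tauOfOmega (m n : ℕ) (ω : ℝ) : ℝ :=
  (1 / (n : ℝ)) * ((ω - (n : ℝ) / (m : ℝ)) / (ω + 1))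

/-- The exponent `ω` with `Q ^ (-ω) = e^{-(1/m + τ) t}` when `Q = e^{(1/n - τ) t}`. -/
noncomputable def omegaOfTau (m n : ℕ) (τ : ℝ) : ℝ :=
  (1 / (m : ℝ) + τ) / (1 / (n : ℝ) - τ)

section Exponents

variable {m n : ℕ} {ω τ : ℝ}

lemma tauOfOmega_eq (hn : 0 < n) (hω : -1 < ω) :
    tauOfOmega m n ω = 1 / (n : ℝ) - (1 / (n : ℝ) + 1 / (m : ℝ)) / (ω + 1) := by
  have : (0 : ℝ) < ω + 1 := by linarith
  unfold tauOfOmega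
  field_simp
  ring

lemma tauOfOmega_lt (hn : 0 < n) (hω : -1 < ω) : tauOfOmega m n ω < 1 / (n : ℝ) := by
  have hω1 : (0 : ℝ) < ω + 1 := by linarith
  rw [tauOfOmega_eq hn hω, sub_lt_self_iff]
  positivity

lemma neg_inv_le_tauOfOmega (hn : 0 < n) (hω : 0 ≤ ω) :
    -(1 / (m : ℝ)) ≤ tauOfOmega m n ω := by
  rw [tauOfOmega_eq hn (by linarith)]
  have : (1 / (n : ℝ) + 1 / (m : ℝ)) / (ω + 1) ≤ 1 / (n : ℝ) + 1 / (m : ℝ) :=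
    div_le_self (by positivity) (by linarith)
  linarith

lemma omegaOfTau_tauOfOmega (hn : 0 < n) (hω : -1 < ω) :
    omegaOfTau m n (tauOfOmega m n ω) = ω := by
  have : (0 : ℝ) < ω + 1 := by linarith
  rw [omegaOfTau, tauOfOmega_eq hn hω, sub_sub_cancel, div_eq_iff (by positivity)]
  field_simp
  ring

lemma omegaOfTau_le_iff (hn : 0 < n) (hτ : τ < 1 / (n : ℝ)) (hω : -1 < ω) :
    omegaOfTau m n τ ≤ ω ↔ τ ≤ tauOfOmega m n ω := by
  have : (0 : ℝ) < ω + 1 := by linarith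
  rw [omegaOfTau, tauOfOmega_eq hn hω, div_le_iff₀ (by linarith), le_sub_comm, div_le_iff₀ this]
  constructor <;> intro h <;> linarith

lemma continuousAt_tauOfOmega (hω : -1 < ω) : ContinuousAt (tauOfOmega m n) ω :=
  continuousAt_const.mul <| (continuousAt_id.sub continuousAt_const).div
    (continuousAt_id.add continuousAt_const) (by linarith)

end Exponents

lemma pi_norm_const_mul {k : ℕ} (c : ℝ) (v : Fin k → ℝ) :
    ‖(fun i => c * v i : Fin k → ℝ)‖ = |c| * ‖v‖ :=
  norm_smul c v

lemma one_le_norm_intCast {k : ℕ} {q : Fin k → ℤ} (hq : q ≠ 0) :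
    1 ≤ ‖(fun j => (q j : ℝ) : Fin k → ℝ)‖ := by
  obtain ⟨j, hj⟩ := Function.ne_iff.1 hq
  calc (1 : ℝ) ≤ |(q j : ℝ)| := by exact_mod_cast Int.one_le_abs hj
    _ ≤ _ := norm_le_pi_norm (fun j => (q j : ℝ)) j

lemma le_neg_log_div_iff {x t τ : ℝ} (hx : 0 < x) (ht : 0 < t) :
    τ ≤ -Real.log x / t ↔ x ≤ Real.exp (-(τ * t)) := by
  rw [le_div_iff₀ ht, ← Real.log_le_iff_le_exp hx, le_neg]

lemma lt_neg_log_div_iff {x t τ : ℝ} (hx : 0 < x) (ht : 0 < t) :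
    τ < -Real.log x / t ↔ x < Real.exp (-(τ * t)) := by
  rw [lt_div_iff₀ ht, ← Real.log_lt_iff_lt_exp hx, lt_neg]

section LatticeVectors

variable {m n : ℕ} {A : Matrix (Fin m) (Fin n) ℝ} {t τ : ℝ} {p : Fin m → ℤ} {q : Fin n → ℤ}

lemma norm_gtuAVec :
    ‖gtuAVec m n A t p q‖ =
      max (Real.exp (t / m) * ‖(fun i => (∑ j, A i j * (q j : ℝ)) + (p i : ℝ) : Fin m → ℝ)‖)
        (Real.exp (-t / n) * ‖(fun j => (q j : ℝ) : Fin n → ℝ)‖) := by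
  simp only [gtuAVec, Prod.norm_def, add_comm (p _ : ℝ), pi_norm_const_mul, Real.abs_exp]

lemma exp_le_norm_gtuAVec_zero (hp : p ≠ 0) : Real.exp (t / m) ≤ ‖gtuAVec m n A t p 0‖ := by
  rw [norm_gtuAVec]
  refine le_max_of_le_left (le_mul_of_one_le_right (Real.exp_pos _).le ?_)
  simpa using one_le_norm_intCast hp

lemma exp_le_norm_gtuAVec (hq : q ≠ 0) : Real.exp (-t / n) ≤ ‖gtuAVec m n A t p q‖ := by
  rw [norm_gtuAVec]
  exact le_max_of_le_right <|
    le_mul_of_one_le_right (Real.exp_pos _).le (one_le_norm_intCast hq)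

lemma norm_gtuAVec_le_exp_iff (hτ : τ ≠ 1 / (n : ℝ)) :
    ‖gtuAVec m n A t p q‖ ≤ Real.exp (-(τ * t)) ↔
      ‖(fun j => (q j : ℝ) : Fin n → ℝ)‖ ≤ Real.exp ((1 / (n : ℝ) - τ) * t) ∧
      ‖(fun i => (∑ j, A i j * (q j : ℝ)) + (p i : ℝ) : Fin m → ℝ)‖ ≤
        Real.exp ((1 / (n : ℝ) - τ) * t) ^ (-omegaOfTau m n τ) := by
  have hd : 1 / (n : ℝ) - τ ≠ 0 := sub_ne_zero.2 hτ.symm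
  have hq : -(τ * t) - -t / n = (1 / (n : ℝ) - τ) * t := by ring
  have hp : -(τ * t) - t / m = (1 / (n : ℝ) - τ) * t * -omegaOfTau m n τ := by
    unfold omegaOfTau
    field_simp
    ring
  rw [norm_gtuAVec, max_le_iff, and_comm, ← Real.exp_mul, ← hp, ← hq, Real.exp_sub, Real.exp_sub,
    le_div_iff₀' (Real.exp_pos _), le_div_iff₀' (Real.exp_pos _)]

end LatticeVectors

section LambdaOne

variable {m n : ℕ} {A : Matrix (Fin m) (Fin n) ℝ} {t τ : ℝ}

lemma lambdaOne_le_norm {p : Fin m → ℤ} {q : Fin n → ℤ} (hpq : ¬(p = 0 ∧ q = 0)) :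
    lambdaOne m n A t ≤ ‖gtuAVec m n A t p q‖ :=
  csInf_le ⟨0, by rintro _ ⟨p, q, -, rfl⟩; exact norm_nonneg _⟩ ⟨p, q, hpq, rfl⟩

lemma exists_norm_gtuAVec_lt (hm : 0 < m) {r : ℝ} (h : lambdaOne m n A t < r) :
    ∃ p q, ¬(p = 0 ∧ q = 0) ∧ ‖gtuAVec m n A t p q‖ < r := by
  have : Nonempty (Fin m) := ⟨⟨0, hm⟩⟩
  obtain ⟨_, ⟨p, q, hpq, rfl⟩, hlt⟩ :=
    exists_lt_of_csInf_lt (by exact ⟨_, 1, 0, fun h => one_ne_zero h.1, rfl⟩) h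
  exact ⟨p, q, hpq, hlt⟩

lemma lambdaOne_le_exp (hm : 0 < m) : lambdaOne m n A t ≤ Real.exp (t / m) := by
  have : Nonempty (Fin m) := ⟨⟨0, hm⟩⟩
  refine (lambdaOne_le_norm (p := 1) (q := 0) fun h => one_ne_zero h.1).trans ?_
  simp [norm_gtuAVec, ← Pi.zero_def, Real.exp_nonneg]

lemma exp_le_lambdaOne (hm : 0 < m) (ht : 0 ≤ t) : Real.exp (-t / n) ≤ lambdaOne m n A t := by
  refine le_of_not_gt fun h => ?_
  obtain ⟨p, q, hpq, hlt⟩ := exists_norm_gtuAVec_lt hm h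
  refine hlt.not_ge ?_
  by_cases hq : q = 0
  · subst hq
    refine (Real.exp_le_exp.2 ?_).trans (exp_le_norm_gtuAVec_zero fun hp => hpq ⟨hp, rfl⟩)
    have : 0 ≤ t / m := by positivity
    have : -t / n ≤ 0 := div_nonpos_of_nonpos_of_nonneg (by linarith) (by positivity)
    linarith
  · exact exp_le_norm_gtuAVec hq

end LambdaOne

section TauHat

variable {m n : ℕ} {A : Matrix (Fin m) (Fin n) ℝ} {τ : ℝ}

lemma eventually_neg_log_lambdaOne_div_mem_Icc (hm : 0 < m) :
    ∀ᶠ t in atTop, -Real.log (lambdaOne m n A t) / t ∈ Set.Icc (-(1 / (m : ℝ))) (1 / (n : ℝ)) := by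
  filter_upwards [eventually_gt_atTop 0] with t ht
  have hlow := exp_le_lambdaOne (A := A) hm ht.le
  have hpos := (Real.exp_pos _).trans_le hlow
  refine ⟨(le_neg_log_div_iff hpos ht).2 ?_, le_of_not_gt fun h => hlow.not_gt ?_⟩
  · rw [show -(-(1 / (m : ℝ)) * t) = t / m by ring]
    exact lambdaOne_le_exp hm
  · rw [show -t / (n : ℝ) = -(1 / n * t) by ring]
    exact (lt_neg_log_div_iff hpos ht).1 h

lemma isBoundedUnder_ge_neg_log_lambdaOne_div (hm : 0 < m) :
    IsBoundedUnder (· ≥ ·) atTop fun t => -Real.log (lambdaOne m n A t) / t :=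
  ⟨_, eventually_map.2 ((eventually_neg_log_lambdaOne_div_mem_Icc hm).mono fun _ h => h.1)⟩

lemma isBoundedUnder_le_neg_log_lambdaOne_div (hm : 0 < m) :
    IsBoundedUnder (· ≤ ·) atTop fun t => -Real.log (lambdaOne m n A t) / t :=
  ⟨_, eventually_map.2 ((eventually_neg_log_lambdaOne_div_mem_Icc hm).mono fun _ h => h.2)⟩

lemma tauHat_le (hm : 0 < m) : tauHat m n A ≤ 1 / (n : ℝ) :=
  liminf_le_of_frequently_le
    ((eventually_neg_log_lambdaOne_div_mem_Icc hm).mono fun _ h => h.2).frequently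
    (isBoundedUnder_ge_neg_log_lambdaOne_div hm)

lemma le_tauHat_of_eventually_lambdaOne_le (hm : 0 < m)
    (h : ∀ᶠ t in atTop, lambdaOne m n A t ≤ Real.exp (-(τ * t))) : τ ≤ tauHat m n A := by
  refine le_liminf_of_le (isBoundedUnder_le_neg_log_lambdaOne_div hm).isCoboundedUnder_ge ?_
  filter_upwards [h, eventually_gt_atTop 0] with t h ht
  exact (le_neg_log_div_iff ((Real.exp_pos _).trans_le (exp_le_lambdaOne hm ht.le)) ht).2 h

lemma eventually_lambdaOne_lt_of_lt_tauHat (hm : 0 < m) (h : τ < tauHat m n A) :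
    ∀ᶠ t in atTop, lambdaOne m n A t < Real.exp (-(τ * t)) := by
  filter_upwards [eventually_lt_of_lt_liminf h (isBoundedUnder_ge_neg_log_lambdaOne_div hm),
    eventually_gt_atTop 0] with t h ht
  exact (lt_neg_log_div_iff ((Real.exp_pos _).trans_le (exp_le_lambdaOne hm ht.le)) ht).1 h

end TauHat

section Correspondence

variable {m n : ℕ} {A : Matrix (Fin m) (Fin n) ℝ} {ω τ : ℝ}

lemma eventually_lambdaOne_le_of_uniformApprox (hτ : τ < 1 / (n : ℝ))
    (h : uniformApprox m n A (omegaOfTau m n τ)) :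
    ∀ᶠ t in atTop, lambdaOne m n A t ≤ Real.exp (-(τ * t)) := by
  have hQ : Tendsto (fun t => Real.exp ((1 / (n : ℝ) - τ) * t)) atTop atTop :=
    Real.tendsto_exp_atTop.comp (tendsto_id.const_mul_atTop (sub_pos.2 hτ))
  filter_upwards [hQ.eventually h] with t ⟨p, q, hq, hqQ, hpQ⟩
  exact (lambdaOne_le_norm fun hpq => hq hpq.2).trans ((norm_gtuAVec_le_exp_iff hτ.ne).2 ⟨hqQ, hpQ⟩)

lemma uniformApprox_of_eventually_lambdaOne_lt (hm : 0 < m) (hτm : -(1 / (m : ℝ)) < τ)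
    (hτ : τ < 1 / (n : ℝ)) (h : ∀ᶠ t in atTop, lambdaOne m n A t < Real.exp (-(τ * t))) :
    uniformApprox m n A (omegaOfTau m n τ) := by
  have hd : 0 < 1 / (n : ℝ) - τ := sub_pos.2 hτ
  have ht : Tendsto (fun Q => Real.log Q / (1 / (n : ℝ) - τ)) atTop atTop :=
    Real.tendsto_log_atTop.atTop_div_const hd
  filter_upwards [ht.eventually (h.and (eventually_ge_atTop 0)), eventually_gt_atTop 0]
    with Q ⟨hlt, ht0⟩ hQ
  set t := Real.log Q / (1 / (n : ℝ) - τ)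
  have hQt : Real.exp ((1 / (n : ℝ) - τ) * t) = Q := by
    rw [mul_div_cancel₀ _ hd.ne', Real.exp_log hQ]
  obtain ⟨p, q, hpq, hnorm⟩ := exists_norm_gtuAVec_lt hm hlt
  have hq : q ≠ 0 := by
    rintro rfl
    refine hnorm.not_ge <|
      (Real.exp_le_exp.2 ?_).trans (exp_le_norm_gtuAVec_zero fun hp => hpq ⟨hp, rfl⟩)
    rw [div_eq_inv_mul, ← one_div]
    nlinarith
  rw [← hQt]
  exact ⟨p, q, hq, (norm_gtuAVec_le_exp_iff hτ.ne).1 hnorm.le⟩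

lemma tauOfOmega_le_tauHat (hm : 0 < m) (hn : 0 < n) (hω : -1 < ω) (h : uniformApprox m n A ω) :
    tauOfOmega m n ω ≤ tauHat m n A := by
  rw [← omegaOfTau_tauOfOmega hn hω] at h
  exact le_tauHat_of_eventually_lambdaOne_le hm
    (eventually_lambdaOne_le_of_uniformApprox (tauOfOmega_lt hn hω) h)

lemma uniformApprox_omegaOfTau_of_lt_tauHat (hm : 0 < m) (hτm : -(1 / (m : ℝ)) < τ)
    (hτ : τ < tauHat m n A) : uniformApprox m n A (omegaOfTau m n τ) :=
  uniformApprox_of_eventually_lambdaOne_lt hm hτm (hτ.trans_le (tauHat_le hm))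
    (eventually_lambdaOne_lt_of_lt_tauHat hm hτ)

lemma uniformApprox_zero (hn : 0 < n) : uniformApprox m n A 0 := by
  filter_upwards [eventually_ge_atTop 1] with Q hQ
  let q : Fin n → ℤ := Pi.single ⟨0, hn⟩ 1
  refine ⟨fun i => -round (∑ j, A i j * (q j : ℝ)), q, ?_, ?_, ?_⟩
  · simp [q]
  · refine (pi_norm_le_iff_of_nonneg (by linarith)).2 fun j => ?_
    rcases eq_or_ne j ⟨0, hn⟩ with rfl | hj <;> simp [q, *]
    linarith
  · rw [neg_zero, Real.rpow_zero, pi_norm_le_iff_of_nonneg zero_le_one]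
    intro i
    simpa [← sub_eq_add_neg] using (abs_sub_round (∑ j, A i j * (q j : ℝ))).trans (by norm_num)

end Correspondence

lemma tauHat_eq_tauOfOmega_of_isLUB {m n : ℕ} {A : Matrix (Fin m) (Fin n) ℝ} {ω : ℝ}
    (hm : 0 < m) (hn : 0 < n) (hω : IsLUB {ω' | uniformApprox m n A ω'} ω) :
    tauHat m n A = tauOfOmega m n ω := by
  have hω0 : 0 ≤ ω := hω.1 (uniformApprox_zero hn)
  refine le_antisymm (le_of_not_gt fun hlt => ?_) ?_
  · obtain ⟨τ, hωτ, hτ⟩ := exists_between hlt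
    have hτm := (neg_inv_le_tauOfOmega hn hω0).trans_lt hωτ
    have := hω.1 (uniformApprox_omegaOfTau_of_lt_tauHat hm hτm hτ)
    exact hωτ.not_ge ((omegaOfTau_le_iff hn (hτ.trans_le (tauHat_le hm)) (by linarith)).1 this)
  · have := mem_closure_iff_nhdsWithin_neBot.1 (hω.mem_closure ⟨0, uniformApprox_zero hn⟩)
    refine le_of_tendsto ((continuousAt_tauOfOmega (by linarith)).tendsto.mono_left
      (nhdsWithin_le_nhds (s := {ω' | uniformApprox m n A ω'}))) ?_
    filter_upwards [self_mem_nhdsWithin,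
      nhdsWithin_le_nhds (Ioi_mem_nhds (show -1 < ω by linarith))] with ω' hA hω'
    exact tauOfOmega_le_tauHat hm hn hω' hA

/-- Dani correspondence for very singular matrices: `A` is very singular
(`ω̂(A) > n/m`) iff `τ̂(A) > 0`; moreover if `ω̂(A) = ω` (as a least upper bound) then
`τ̂(A) = (1/n)·(ω - n/m)/(ω + 1)`. -/
theorem very_singular_iff_tauHat_pos (m n : ℕ) (hm : 0 < m) (hn : 0 < n)
    (A : Matrix (Fin m) (Fin n) ℝ) :
    ((∃ ω : ℝ, (n : ℝ) / (m : ℝ) < ω ∧ uniformApprox m n A ω) ↔ 0 < tauHat m n A) ∧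
    (∀ ω : ℝ, IsLUB {ω' : ℝ | uniformApprox m n A ω'} ω →
      tauHat m n A = (1 / (n : ℝ)) * ((ω - (n : ℝ) / (m : ℝ)) / (ω + 1))) := by
  have hnm : (0 : ℝ) < n / m := by positivity
  have hm' : (0 : ℝ) < 1 / m := by positivity
  refine ⟨⟨fun ⟨ω, hω, hA⟩ => ?_, fun hτ => ?_⟩, fun ω hω => tauHat_eq_tauOfOmega_of_isLUB hm hn hω⟩
  · refine lt_of_lt_of_le ?_ (tauOfOmega_le_tauHat hm hn (by linarith) hA)
    exact mul_pos (by positivity) (div_pos (sub_pos.2 hω) (by linarith))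
  · refine ⟨omegaOfTau m n (tauHat m n A / 2), ?_,
      uniformApprox_omegaOfTau_of_lt_tauHat hm (by linarith) (half_lt_self hτ)⟩
    have hτn : tauHat m n A / 2 < 1 / n := (half_lt_self hτ).trans_le (tauHat_le hm)
    rw [← not_le, omegaOfTau_le_iff hn hτn (by linarith)]
    simpa [tauOfOmega] using hτ
end

section
/- Fix 0 < β < 1 and a positive integer D. Suppose in the D-dimensional Hausdorff game Alice plays a winning strategy guaranteeing score δ, and on each turn k Bob chooses the center x_k ∈ A_k uniformly at random (independently over turns), producing the outcome measure μ on the resulting Cantor set C. Then for every x ∈ C, the lower pointwise dimension satisfies liminf_{ρ→0} log μ(B(x,ρ))/log ρ ≥ δ. Consequently the Hausdorff dimension of C is at least δ. -/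
/-!
Two plays whose `k`-th moves are `3ρ_k`-close have made the same first `k + 1` moves: the moves
are `3ρ_k`-separated and each move lies within `(1 - β)ρ_k` of the previous one. Hence a ball of
radius `ρ < ρ_k` around an outcome `y` meets `C` only inside the ball `B(x_k, ρ_k)` of a play
`x` leading to `y`, whose mass is `(∏_{i ≤ k} #A_i)⁻¹`, while `B(y, 2ρ_k)` contains that ball.
Comparing the scales `ρ` and `ρ_k` turns the score bound into the bound on the lower pointwise
dimension, and the mass distribution principle turns the latter into `dimH C ≥ δ`.
-/

open Filter MeasureTheory

/-- The history of Bob's first `k` choices. -/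
def gameHist {E : Type*} (x : ℕ → E) (k : ℕ) : List E :=
  List.ofFn (fun i : Fin k => x i)

/-- A play of the game against Alice's strategy `σ`: on turn `k`, Bob's choice `x k`
belongs to the set `σ(history)` offered by Alice. -/
def IsPlay {E : Type*} (σ : List E → Finset E) (x : ℕ → E) : Prop :=
  ∀ k, x k ∈ σ (gameHist x k)

open Metric Real
open scoped Topology ENNReal NNReal

section Game

variable {E : Type*} {σ : List E → Finset E} {β ρ₀ : ℝ} {x x' : ℕ → E}

lemma gameHist_length (x : ℕ → E) (k : ℕ) : (gameHist x k).length = k := by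
  simp [gameHist]

lemma gameHist_succ (x : ℕ → E) (k : ℕ) : gameHist x (k + 1) = gameHist x k ++ [x k] := by
  rw [gameHist, List.ofFn_succ', List.concat_eq_append]
  rfl

lemma apply_eq_of_gameHist_succ_eq {k : ℕ} (h : gameHist x (k + 1) = gameHist x' (k + 1)) :
    x k = x' k := by
  rw [gameHist_succ, gameHist_succ] at h
  exact (List.append_inj' h rfl).2 |> List.singleton_inj.1

variable [MetricSpace E]

def IsSeparatedStrategy (σ : List E → Finset E) (β ρ₀ : ℝ) : Prop :=
  ∀ h : List E, ∀ a ∈ σ h, ∀ b ∈ σ h, a ≠ b → 3 * (β ^ h.length * ρ₀) ≤ dist a b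

def IsNestedStrategy (σ : List E → Finset E) (β ρ₀ : ℝ) : Prop :=
  ∀ x : ℕ → E, IsPlay σ x → ∀ k : ℕ,
    ∀ a ∈ σ (gameHist x (k + 1)), a ∈ closedBall (x k) ((1 - β) * (β ^ k * ρ₀))

def outcomeSet (σ : List E → Finset E) (β ρ₀ : ℝ) : Set E :=
  {y | ∃ x : ℕ → E, IsPlay σ x ∧ ∀ k : ℕ, y ∈ closedBall (x k) (β ^ k * ρ₀)}

lemma IsSeparatedStrategy.eq_of_dist_lt (hsep : IsSeparatedStrategy σ β ρ₀) {h : List E}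
    {a b : E} (ha : a ∈ σ h) (hb : b ∈ σ h) (hab : dist a b < 3 * (β ^ h.length * ρ₀)) :
    a = b := by
  by_contra hne
  exact (hab.trans_le (hsep h a ha b hb hne)).false

lemma IsSeparatedStrategy.gameHist_succ_eq (hsep : IsSeparatedStrategy σ β ρ₀)
    (hx : IsPlay σ x) (hx' : IsPlay σ x') {k : ℕ} (hhist : gameHist x k = gameHist x' k)
    (hd : dist (x k) (x' k) < 3 * (β ^ k * ρ₀)) : gameHist x (k + 1) = gameHist x' (k + 1) := by
  have hk' : x' k ∈ σ (gameHist x k) := hhist ▸ hx' k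
  have heq := hsep.eq_of_dist_lt (hx k) hk' (by rwa [gameHist_length])
  rw [gameHist_succ, gameHist_succ, hhist, heq]

lemma IsNestedStrategy.dist_lt_of_dist_succ_lt (hnest : IsNestedStrategy σ β ρ₀)
    (hx : IsPlay σ x) (hx' : IsPlay σ x') {k : ℕ}
    (hd : dist (x (k + 1)) (x' (k + 1)) < 3 * (β ^ (k + 1) * ρ₀)) :
    dist (x k) (x' k) < 3 * (β ^ k * ρ₀) := by
  have h₁ := mem_closedBall'.1 (hnest x hx k _ (hx (k + 1)))
  have h₂ := mem_closedBall.1 (hnest x' hx' k _ (hx' (k + 1)))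
  have h₃ := dist_triangle4 (x k) (x (k + 1)) (x' (k + 1)) (x' k)
  rw [pow_succ] at hd
  linarith [dist_nonneg (x := x k) (y := x (k + 1))]

lemma gameHist_succ_eq_of_dist_lt (hsep : IsSeparatedStrategy σ β ρ₀)
    (hnest : IsNestedStrategy σ β ρ₀) (hx : IsPlay σ x) (hx' : IsPlay σ x') :
    ∀ k, dist (x k) (x' k) < 3 * (β ^ k * ρ₀) → gameHist x (k + 1) = gameHist x' (k + 1)
  | 0, hd => hsep.gameHist_succ_eq hx hx' rfl hd
  | k + 1, hd => hsep.gameHist_succ_eq hx hx'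
      (gameHist_succ_eq_of_dist_lt hsep hnest hx hx' k (hnest.dist_lt_of_dist_succ_lt hx hx' hd)) hd

lemma closedBall_inter_outcomeSet_subset (hsep : IsSeparatedStrategy σ β ρ₀)
    (hnest : IsNestedStrategy σ β ρ₀) (hx : IsPlay σ x) {y : E}
    (hy : ∀ k, y ∈ closedBall (x k) (β ^ k * ρ₀)) {k : ℕ} {ρ : ℝ} (hρ : ρ < β ^ k * ρ₀) :
    closedBall y ρ ∩ outcomeSet σ β ρ₀ ⊆ closedBall (x k) (β ^ k * ρ₀) := by
  rintro z ⟨hzy, x', hx', hz⟩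
  have hd : dist (x k) (x' k) < 3 * (β ^ k * ρ₀) := by
    have := dist_triangle4 (x k) y z (x' k)
    linarith [mem_closedBall'.1 (hy k), mem_closedBall'.1 hzy, mem_closedBall.1 (hz k)]
  rw [apply_eq_of_gameHist_succ_eq (gameHist_succ_eq_of_dist_lt hsep hnest hx hx' k hd)]
  exact hz k

lemma measure_closedBall_le_of_lt [MeasurableSpace E] {μ : Measure E}
    (hμ : μ (outcomeSet σ β ρ₀)ᶜ = 0) (hsep : IsSeparatedStrategy σ β ρ₀)
    (hnest : IsNestedStrategy σ β ρ₀) (hx : IsPlay σ x) {y : E}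
    (hy : ∀ k, y ∈ closedBall (x k) (β ^ k * ρ₀)) {k : ℕ} {ρ : ℝ} (hρ : ρ < β ^ k * ρ₀) :
    μ (closedBall y ρ) ≤ μ (closedBall (x k) (β ^ k * ρ₀)) := by
  rw [← measure_inter_conull hμ]
  exact measure_mono (closedBall_inter_outcomeSet_subset hsep hnest hx hy hρ)

end Game

namespace Real

variable {α : Type*} {l : Filter α} {f : α → ℝ}

lemma liminf_nonneg_of_eventually (h : ∀ᶠ x in l, 0 ≤ f x) : 0 ≤ liminf f l := by
  by_cases hf : l.IsCoboundedUnder (· ≥ ·) f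
  · exact le_liminf_of_le hf h
  · rw [liminf_of_not_isCoboundedUnder hf]

/- `liminf` in `ℝ` is `0` for functions that are not bounded below or not cobounded, hence
`0 < δ`. -/
lemma le_liminf_iff_of_pos [l.NeBot] {δ : ℝ} (hδ : 0 < δ) :
    δ ≤ liminf f l ↔ (∀ b < δ, ∀ᶠ x in l, b ≤ f x) ∧ ∃ B, ∃ᶠ x in l, f x ≤ B := by
  constructor
  · intro h
    have hcob : l.IsCoboundedUnder (· ≥ ·) f := by
      by_contra hf
      rw [liminf_of_not_isCoboundedUnder hf] at h
      linarith
    have hbdd : l.IsBoundedUnder (· ≥ ·) f := by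
      by_contra hf
      rw [liminf_of_not_isBoundedUnder hf] at h
      linarith
    exact ⟨(le_liminf_iff' hcob hbdd).1 h, hcob.frequently_le⟩
  · rintro ⟨hev, B, hB⟩
    have hbdd : l.IsBoundedUnder (· ≥ ·) f := isBoundedUnder_of_eventually_ge (hev _ (sub_one_lt δ))
    exact (le_liminf_iff' (IsCoboundedUnder.of_frequently_le hB) hbdd).2 hev

end Real

section Scales

variable {β ρ₀ : ℝ} {m : ℝ → ℝ} {p : ℕ → ℝ}

lemma exists_le_pow_mul_le_lt (hβ0 : 0 < β) (hβ1 : β < 1) (hρ₀ : 0 < ρ₀) {ρ : ℝ} {K : ℕ}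
    (hρ : 0 < ρ) (hK : ρ < β ^ K * ρ₀) :
    ∃ k, K ≤ k ∧ β ^ (k + 1) * ρ₀ ≤ ρ ∧ ρ < β ^ k * ρ₀ := by
  classical
  have hex : ∃ n : ℕ, β ^ n * ρ₀ ≤ ρ := by
    obtain ⟨n, hn⟩ := exists_pow_lt_of_lt_one (div_pos hρ hρ₀) hβ1
    exact ⟨n, ((lt_div_iff₀ hρ₀).1 hn).le⟩
  have hK_lt : K < Nat.find hex := by
    by_contra! hle
    have := mul_le_mul_of_nonneg_right (pow_le_pow_of_le_one hβ0.le hβ1.le hle) hρ₀.le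
    linarith [Nat.find_spec hex]
  obtain ⟨k, hk⟩ := Nat.exists_eq_add_of_lt hK_lt
  refine ⟨K + k, le_self_add, hk ▸ Nat.find_spec hex, not_le.1 (Nat.find_min hex ?_)⟩
  omega

lemma eventually_nonneg_log_div_log (hm_pos : ∀ ρ, 0 < ρ → 0 < m ρ) (hm_le : ∀ ρ, m ρ ≤ 1) :
    ∀ᶠ ρ in 𝓝[>] 0, 0 ≤ log (m ρ) / log ρ := by
  filter_upwards [Ioo_mem_nhdsGT one_pos] with ρ ⟨hρ0, hρ1⟩
  exact div_nonneg_of_nonpos (log_nonpos (hm_pos ρ hρ0).le (hm_le ρ)) (log_nonpos hρ0.le hρ1.le)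

lemma eventually_le_log_div_log (hβ0 : 0 < β) (hβ1 : β < 1) (hρ₀ : 0 < ρ₀)
    (hm_pos : ∀ ρ, 0 < ρ → 0 < m ρ)
    (hupper : ∀ k ρ, 0 < ρ → ρ < β ^ k * ρ₀ → m ρ ≤ p k) {b b' : ℝ} (hb : 0 < b) (hbb' : b < b')
    (hp : ∀ᶠ k in atTop, b' ≤ log (p k) / log (β ^ k)) :
    ∀ᶠ ρ in 𝓝[>] 0, b ≤ log (m ρ) / log ρ := by
  have hlogβ : log β < 0 := log_neg hβ0 hβ1
  have hlarge : ∀ᶠ k : ℕ in atTop, b * (-log β - log ρ₀) ≤ k * ((b' - b) * -log β) :=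
    (tendsto_natCast_atTop_atTop.atTop_mul_const
      (mul_pos (sub_pos.2 hbb') (neg_pos.2 hlogβ))).eventually_ge_atTop _
  obtain ⟨K, hK⟩ := eventually_atTop.1 ((hp.and (eventually_ge_atTop 1)).and hlarge)
  have hK_pos : 0 < min (β ^ K * ρ₀) 1 := lt_min (by positivity) one_pos
  filter_upwards [Ioo_mem_nhdsGT hK_pos] with ρ ⟨hρ0, hρK⟩
  obtain ⟨k, hKk, hkρ, hρk⟩ :=
    exists_le_pow_mul_le_lt hβ0 hβ1 hρ₀ hρ0 (hρK.trans_le (min_le_left _ _))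
  obtain ⟨⟨hpk, hk1⟩, hk⟩ := hK k hKk
  have hlogβk : log (β ^ k) < 0 := by
    rw [log_pow]; exact mul_neg_of_pos_of_neg (by exact_mod_cast hk1) hlogβ
  have hlogp : log (p k) ≤ b' * (k * log β) := by
    rw [← log_pow]; exact (le_div_iff_of_neg hlogβk).1 hpk
  have hlogm : log (m ρ) ≤ log (p k) := log_le_log (hm_pos ρ hρ0) (hupper k ρ hρ0 hρk)
  have hlogρ : (k + 1) * log β + log ρ₀ ≤ log ρ := by
    have := log_le_log (by positivity) hkρ
    rwa [log_mul (by positivity) hρ₀.ne', log_pow, Nat.cast_succ] at this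
  rw [le_div_iff_of_neg (log_neg hρ0 (hρK.trans_le (min_le_right _ _)))]
  linarith [mul_le_mul_of_nonneg_left hlogρ hb.le]

lemma frequently_log_div_log_le (hβ0 : 0 < β) (hβ1 : β < 1) (hρ₀ : 0 < ρ₀)
    (hp_pos : ∀ k, 0 < p k) (hlower : ∀ k, p k ≤ m (2 * (β ^ k * ρ₀))) {M : ℝ}
    (hM : ∃ᶠ k in atTop, log (p k) / log (β ^ k) ≤ M) :
    ∃ B, ∃ᶠ ρ in 𝓝[>] 0, log (m ρ) / log ρ ≤ B := by
  have hlogβ : log β < 0 := log_neg hβ0 hβ1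
  have hlarge : ∀ᶠ k : ℕ in atTop, log (2 * ρ₀) ≤ k * (-log β / 2) :=
    (tendsto_natCast_atTop_atTop.atTop_mul_const (by linarith)).eventually_ge_atTop _
  have hscale : Tendsto (fun k : ℕ => 2 * (β ^ k * ρ₀)) atTop (𝓝[>] 0) := by
    refine tendsto_nhdsWithin_of_tendsto_nhds_of_eventually_within _ ?_
      (Eventually.of_forall fun k => by simp only [Set.mem_Ioi]; positivity)
    simpa using ((tendsto_pow_atTop_nhds_zero_of_lt_one hβ0.le hβ1).mul_const ρ₀).const_mul 2
  refine ⟨2 * max M 0, hscale.frequently ?_⟩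
  refine (hM.and_eventually ((eventually_ge_atTop 1).and hlarge)).mono ?_
  rintro k ⟨hpk, hk1, hk⟩
  have hkβ : (k : ℝ) * log β < 0 := mul_neg_of_pos_of_neg (by exact_mod_cast hk1) hlogβ
  have hlogp : max M 0 * (k * log β) ≤ log (p k) := by
    rw [← log_pow]
    refine le_trans ?_ ((div_le_iff_of_neg (by rwa [log_pow])).1 hpk)
    rw [log_pow]; exact mul_le_mul_of_nonpos_right (le_max_left _ _) hkβ.le
  have hlogm : log (p k) ≤ log (m (2 * (β ^ k * ρ₀))) := log_le_log (hp_pos k) (hlower k)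
  have hlogρ : log (2 * (β ^ k * ρ₀)) ≤ k * log β / 2 := by
    rw [mul_left_comm, log_mul (by positivity) (by positivity), log_pow]
    linarith
  rw [div_le_iff_of_neg (by linarith)]
  linarith [mul_le_mul_of_nonneg_left hlogρ (le_max_right M 0)]

lemma le_liminf_log_div_log (hβ0 : 0 < β) (hβ1 : β < 1) (hρ₀ : 0 < ρ₀) (hm_mono : Monotone m)
    (hm_le : ∀ ρ, m ρ ≤ 1) (hp_pos : ∀ k, 0 < p k)
    (hupper : ∀ k ρ, 0 < ρ → ρ < β ^ k * ρ₀ → m ρ ≤ p k)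
    (hlower : ∀ k, p k ≤ m (2 * (β ^ k * ρ₀))) {δ : ℝ}
    (hδ : δ ≤ liminf (fun k => log (p k) / log (β ^ k)) atTop) :
    δ ≤ liminf (fun ρ => log (m ρ) / log ρ) (𝓝[>] 0) := by
  have hm_pos : ∀ ρ, 0 < ρ → 0 < m ρ := by
    intro ρ hρ
    obtain ⟨k, hk⟩ := exists_pow_lt_of_lt_one (by positivity : 0 < ρ / (2 * ρ₀)) hβ1
    rw [lt_div_iff₀ (by positivity)] at hk
    exact (hp_pos k).trans_le ((hlower k).trans (hm_mono (by linarith)))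
  have hnonneg := eventually_nonneg_log_div_log hm_pos hm_le
  rcases le_or_gt δ 0 with hδ0 | hδ0
  · exact hδ0.trans (Real.liminf_nonneg_of_eventually hnonneg)
  obtain ⟨hev, M, hM⟩ := (Real.le_liminf_iff_of_pos hδ0).1 hδ
  refine (Real.le_liminf_iff_of_pos hδ0).2
    ⟨fun b hb => ?_, frequently_log_div_log_le hβ0 hβ1 hρ₀ hp_pos hlower hM⟩
  rcases le_or_gt b 0 with hb0 | hb0
  · exact hnonneg.mono fun ρ hρ => hb0.trans hρ
  exact eventually_le_log_div_log hβ0 hβ1 hρ₀ hm_pos hupper hb0 (left_lt_add_div_two.2 hb)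
    (hev _ (add_div_two_lt_right.2 hb))

end Scales

section Pointwise

variable {X : Type*} [MetricSpace X] [MeasurableSpace X] {μ : Measure X} [IsProbabilityMeasure μ]
  {β ρ₀ : ℝ}

lemma le_liminf_log_measure_closedBall_div_log (hβ0 : 0 < β) (hβ1 : β < 1) (hρ₀ : 0 < ρ₀)
    {y : X} {z : ℕ → X} (hyz : ∀ k, dist y (z k) ≤ β ^ k * ρ₀)
    (hpos : ∀ k, μ (closedBall (z k) (β ^ k * ρ₀)) ≠ 0)
    (hupper : ∀ k ρ, 0 < ρ → ρ < β ^ k * ρ₀ →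
      μ (closedBall y ρ) ≤ μ (closedBall (z k) (β ^ k * ρ₀))) {δ : ℝ}
    (hδ : δ ≤ liminf (fun k => log (μ (closedBall (z k) (β ^ k * ρ₀))).toReal / log (β ^ k))
      atTop) :
    δ ≤ liminf (fun ρ => log (μ (closedBall y ρ)).toReal / log ρ) (𝓝[>] 0) := by
  refine le_liminf_log_div_log hβ0 hβ1 hρ₀
    (fun a b hab => ENNReal.toReal_mono (measure_ne_top μ _) (measure_mono
      (closedBall_subset_closedBall hab)))
    (fun ρ => measureReal_le_one) (fun k => ENNReal.toReal_pos (hpos k) (measure_ne_top μ _))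
    (fun k ρ hρ hρk => ENNReal.toReal_mono (measure_ne_top μ _) (hupper k ρ hρ hρk))
    (fun k => ENNReal.toReal_mono (measure_ne_top μ _) (measure_mono ?_)) hδ
  exact closedBall_subset_closedBall' (by linarith [hyz k, dist_comm y (z k)])

end Pointwise

lemma le_rpow_of_le_log_div_log {a ρ d : ℝ} (ha : 0 ≤ a) (hρ0 : 0 < ρ) (hρ1 : ρ < 1)
    (h : d ≤ log a / log ρ) : a ≤ ρ ^ d := by
  rcases ha.eq_or_lt with rfl | ha
  · positivity
  rw [le_rpow_iff_log_le ha hρ0]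
  exact (le_div_iff_of_neg (log_neg hρ0 hρ1)).1 h

section MassDistribution

variable {X : Type*} [MetricSpace X] [MeasurableSpace X] {μ : Measure X}
  {s : Set X} {d r : ℝ}

lemma measure_inter_le_ediam_rpow (hd : 0 ≤ d)
    (h : ∀ y ∈ s, ∀ ρ, 0 < ρ → ρ < r → μ (closedBall y ρ) ≤ ENNReal.ofReal (ρ ^ d))
    {t : Set X} (ht : ediam t ≤ ENNReal.ofReal (r / 2)) (hr : 0 < r) :
    μ (t ∩ s) ≤ ⨆ _ : t.Nonempty, ediam t ^ d := by
  rcases (t ∩ s).eq_empty_or_nonempty with hts | ⟨z, hzt, hzs⟩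
  · simp [hts]
  rw [iSup_pos ⟨z, hzt⟩]
  have ht_top : ediam t ≠ ⊤ := ne_top_of_le_ne_top ENNReal.ofReal_ne_top ht
  have hdiam_lt : diam t < r := by
    have := ENNReal.toReal_mono ENNReal.ofReal_ne_top ht
    rw [ENNReal.toReal_ofReal (by positivity)] at this
    exact this.trans_lt (half_lt_self hr)
  have hball : ∀ ρ, diam t < ρ → ρ < r → μ (t ∩ s) ≤ ENNReal.ofReal (ρ ^ d) := by
    intro ρ hρ hρr
    refine (measure_mono fun w hw => ?_).trans (h z hzs ρ (diam_nonneg.trans_lt hρ) hρr)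
    exact mem_closedBall.2 ((dist_le_diam_of_mem' ht_top hw.1 hzt).trans hρ.le)
  have hlim : Tendsto (fun ρ => ENNReal.ofReal (ρ ^ d)) (𝓝[>] (diam t))
      (𝓝 (ENNReal.ofReal (diam t ^ d))) :=
    ((ENNReal.continuous_ofReal.tendsto _).comp
      (continuousAt_rpow_const _ _ (Or.inr hd))).mono_left nhdsWithin_le_nhds
  have hediam : ediam t = ENNReal.ofReal (diam t) := (ENNReal.ofReal_toReal ht_top).symm
  rw [hediam, ENNReal.ofReal_rpow_of_nonneg diam_nonneg hd]
  refine ge_of_tendsto hlim ?_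
  filter_upwards [Ioo_mem_nhdsGT hdiam_lt] with ρ ⟨hρ, hρr⟩ using hball ρ hρ hρr

variable [BorelSpace X]

lemma measure_le_hausdorffMeasure (hd : 0 ≤ d) (hr : 0 < r)
    (h : ∀ y ∈ s, ∀ ρ, 0 < ρ → ρ < r → μ (closedBall y ρ) ≤ ENNReal.ofReal (ρ ^ d)) :
    μ s ≤ μH[d] s := by
  rw [Measure.hausdorffMeasure_apply]
  refine le_iSup₂_of_le (ENNReal.ofReal (r / 2)) (by simpa using hr) ?_
  refine le_iInf fun t => le_iInf fun hst => le_iInf fun ht => ?_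
  calc μ s ≤ μ (⋃ n, t n ∩ s) := measure_mono fun y hy => by
        obtain ⟨n, hn⟩ := Set.mem_iUnion.1 (hst hy)
        exact Set.mem_iUnion.2 ⟨n, hn, hy⟩
    _ ≤ ∑' n, μ (t n ∩ s) := measure_iUnion_le _
    _ ≤ ∑' n, ⨆ _ : (t n).Nonempty, ediam (t n) ^ d :=
        ENNReal.tsum_le_tsum fun n => measure_inter_le_ediam_rpow hd h (ht n) hr

lemma le_dimH_of_forall_eventually_measure_closedBall_le (hs : μ s ≠ 0) (hd : 0 ≤ d)
    (h : ∀ y ∈ s, ∀ᶠ ρ in 𝓝[>] 0, μ (closedBall y ρ) ≤ ENNReal.ofReal (ρ ^ d)) :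
    ENNReal.ofReal d ≤ dimH s := by
  set s' : ℕ → Set X := fun n =>
    {y ∈ s | ∀ ρ : ℝ, 0 < ρ → ρ < 1 / ((n : ℝ) + 1) → μ (closedBall y ρ) ≤ ENNReal.ofReal (ρ ^ d)}
  have hcover : s ⊆ ⋃ n, s' n := by
    intro y hy
    obtain ⟨ε, hε, hball⟩ := (nhdsGT_basis (0 : ℝ)).eventually_iff.1 (h y hy)
    obtain ⟨n, hn⟩ := exists_nat_one_div_lt hε
    exact Set.mem_iUnion.2 ⟨n, hy, fun ρ hρ hρn => hball ⟨hρ, hρn.trans hn⟩⟩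
  obtain ⟨n, hn⟩ : ∃ n, μ (s' n) ≠ 0 := by
    by_contra! hnull
    exact hs (measure_mono_null hcover (measure_iUnion_null hnull))
  have hH : μH[d] s ≠ 0 := fun hH => hn <| le_antisymm
    ((measure_le_hausdorffMeasure hd Nat.one_div_pos_of_nat fun y hy => hy.2).trans
      (hH ▸ measure_mono fun y hy => hy.1)) zero_le
  rw [← Real.coe_toNNReal d hd] at hH
  exact le_dimH_of_hausdorffMeasure_ne_zero hH

lemma le_dimH_of_le_liminf_log_measure_closedBall [IsFiniteMeasure μ] (hs : μ s ≠ 0) {δ : ℝ}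
    (h : ∀ y ∈ s, δ ≤ liminf (fun ρ => log (μ (closedBall y ρ)).toReal / log ρ) (𝓝[>] 0)) :
    ENNReal.ofReal δ ≤ dimH s := by
  rcases le_or_gt δ 0 with hδ | hδ
  · simp [ENNReal.ofReal_of_nonpos hδ]
  have hlt : ∀ d ∈ Set.Ioo 0 δ, ENNReal.ofReal d ≤ dimH s := by
    rintro d ⟨hd0, hdδ⟩
    refine le_dimH_of_forall_eventually_measure_closedBall_le hs hd0.le fun y hy => ?_
    filter_upwards [((Real.le_liminf_iff_of_pos hδ).1 (h y hy)).1 d hdδ,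
      Ioo_mem_nhdsGT one_pos] with ρ hρ ⟨hρ0, hρ1⟩
    rw [← ENNReal.ofReal_toReal (measure_ne_top μ _)]
    exact ENNReal.ofReal_le_ofReal (le_rpow_of_le_log_div_log ENNReal.toReal_nonneg hρ0 hρ1 hρ)
  refine le_of_tendsto ((ENNReal.continuous_ofReal.tendsto δ).mono_left
    (nhdsWithin_le_nhds (s := Set.Iio δ))) ?_
  filter_upwards [Ioo_mem_nhdsLT hδ] using hlt

end MassDistribution

lemma score_eq_log_inv_prod_div_log_pow (β : ℝ) {n : ℕ → ℕ} (hn : ∀ i, n i ≠ 0) (k : ℕ) :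
    (1 / (k : ℝ)) * ∑ i ∈ Finset.range (k + 1), log (n i) / (-log β) =
      log ((∏ i ∈ Finset.range (k + 1), (n i : ℝ≥0∞))⁻¹).toReal / log (β ^ k) := by
  rw [ENNReal.toReal_inv, ENNReal.toReal_prod, log_inv, log_prod (fun i _ => by simpa using hn i),
    log_pow, ← Finset.sum_div]
  simp only [ENNReal.toReal_natCast]
  -- no `k ≠ 0` needed: at `k = 0` both sides are `0`, as `1 / 0 = 0` and `log (β ^ 0) = 0`
  field_simp

theorem hausdorff_game_lower_bound_general (D : ℕ) (β ρ₀ δ : ℝ)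
    (hβ0 : 0 < β) (hβ1 : β < 1) (hρ : 0 < ρ₀)
    (σ : List (EuclideanSpace ℝ (Fin D)) → Finset (EuclideanSpace ℝ (Fin D)))
    (hsep : ∀ h : List (EuclideanSpace ℝ (Fin D)),
      ∀ a ∈ σ h, ∀ b ∈ σ h, a ≠ b → 3 * (β ^ h.length * ρ₀) ≤ dist a b)
    (hcontain : ∀ x : ℕ → EuclideanSpace ℝ (Fin D), IsPlay σ x → ∀ k : ℕ,
      ∀ a ∈ σ (gameHist x (k + 1)),
        a ∈ Metric.closedBall (x k) ((1 - β) * (β ^ k * ρ₀)))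
    (hscore : ∀ x : ℕ → EuclideanSpace ℝ (Fin D), IsPlay σ x →
      δ ≤ liminf (fun k : ℕ =>
        (1 / (k : ℝ)) * ∑ i ∈ Finset.range (k + 1),
          Real.log ((σ (gameHist x i)).card) / (-Real.log β)) atTop)
    (C : Set (EuclideanSpace ℝ (Fin D)))
    (hC : C = {y | ∃ x : ℕ → EuclideanSpace ℝ (Fin D), IsPlay σ x ∧
      ∀ k : ℕ, y ∈ Metric.closedBall (x k) (β ^ k * ρ₀)})
    (μ : Measure (EuclideanSpace ℝ (Fin D))) [IsProbabilityMeasure μ]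
    (hμsupp : μ Cᶜ = 0)
    (hμ : ∀ x : ℕ → EuclideanSpace ℝ (Fin D), IsPlay σ x → ∀ k : ℕ,
      μ (Metric.closedBall (x k) (β ^ k * ρ₀)) =
        (∏ i ∈ Finset.range (k + 1), ((σ (gameHist x i)).card : ENNReal))⁻¹) :
    (∀ y ∈ C, δ ≤ liminf
        (fun ρ : ℝ => Real.log (μ (Metric.closedBall y ρ)).toReal / Real.log ρ)
        (nhdsWithin 0 (Set.Ioi 0))) ∧
    ENNReal.ofReal δ ≤ dimH C := by
  obtain rfl : C = outcomeSet σ β ρ₀ := hC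
  have hdim : ∀ y ∈ outcomeSet σ β ρ₀,
      δ ≤ liminf (fun ρ => log (μ (closedBall y ρ)).toReal / log ρ) (𝓝[>] 0) := by
    rintro y ⟨x, hx, hy⟩
    have hcard : ∀ i, (σ (gameHist x i)).card ≠ 0 := fun i => Finset.card_ne_zero_of_mem (hx i)
    refine le_liminf_log_measure_closedBall_div_log hβ0 hβ1 hρ (fun k => mem_closedBall.1 (hy k))
      (fun k => ?_) (fun k ρ _ hρk => measure_closedBall_le_of_lt hμsupp hsep hcontain hx hy hρk) ?_
    · rw [hμ x hx k]
      exact ENNReal.inv_ne_zero.2 (ENNReal.prod_ne_top fun _ _ => ENNReal.natCast_ne_top _)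
    · simpa only [hμ x hx, score_eq_log_inv_prod_div_log_pow β hcard] using hscore x hx
  have hμC : μ (outcomeSet σ β ρ₀) ≠ 0 := by
    rw [← Set.univ_inter (outcomeSet σ β ρ₀), measure_inter_conull hμsupp]
    exact NeZero.ne _
  exact ⟨hdim, le_dimH_of_le_liminf_log_measure_closedBall hμC hdim⟩

/-- Hausdorff-game lower bound: if Alice plays a winning strategy `σ` in the
`β`-game (with initial radius `ρ₀`, radii `ρ_k = β^k ρ₀`, each move a nonempty
`3ρ_k`-separated finite set contained in `B(x_{k-1},(1-β)ρ_{k-1})`) guaranteeing score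
`≥ δ`, and Bob chooses uniformly at random producing the outcome measure `μ` on the
Cantor set `C` of possible outcomes (so that `μ(B(x_k,ρ_k)) = (∏_{i≤k} #A_i)⁻¹` along
every play), then every `y ∈ C` has lower pointwise dimension `≥ δ`, and hence
`dimH C ≥ δ`. -/
theorem hausdorff_game_lower_bound (D : ℕ) (hD : 0 < D) (β ρ₀ δ : ℝ)
    (hβ0 : 0 < β) (hβ1 : β < 1) (hρ : 0 < ρ₀)
    (σ : List (EuclideanSpace ℝ (Fin D)) → Finset (EuclideanSpace ℝ (Fin D)))
    (hne : ∀ h, (σ h).Nonempty)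
    (hsep : ∀ h : List (EuclideanSpace ℝ (Fin D)),
      ∀ a ∈ σ h, ∀ b ∈ σ h, a ≠ b → 3 * (β ^ h.length * ρ₀) ≤ dist a b)
    (hcontain : ∀ x : ℕ → EuclideanSpace ℝ (Fin D), IsPlay σ x → ∀ k : ℕ,
      ∀ a ∈ σ (gameHist x (k + 1)),
        a ∈ Metric.closedBall (x k) ((1 - β) * (β ^ k * ρ₀)))
    (hscore : ∀ x : ℕ → EuclideanSpace ℝ (Fin D), IsPlay σ x →
      δ ≤ liminf (fun k : ℕ =>
        (1 / (k : ℝ)) * ∑ i ∈ Finset.range (k + 1),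
          Real.log ((σ (gameHist x i)).card) / (-Real.log β)) atTop)
    (C : Set (EuclideanSpace ℝ (Fin D)))
    (hC : C = {y | ∃ x : ℕ → EuclideanSpace ℝ (Fin D), IsPlay σ x ∧
      ∀ k : ℕ, y ∈ Metric.closedBall (x k) (β ^ k * ρ₀)})
    (μ : Measure (EuclideanSpace ℝ (Fin D))) [IsProbabilityMeasure μ]
    (hμsupp : μ Cᶜ = 0)
    (hμ : ∀ x : ℕ → EuclideanSpace ℝ (Fin D), IsPlay σ x → ∀ k : ℕ,
      μ (Metric.closedBall (x k) (β ^ k * ρ₀)) =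
        (∏ i ∈ Finset.range (k + 1), ((σ (gameHist x i)).card : ENNReal))⁻¹) :
    (∀ y ∈ C, δ ≤ liminf
        (fun ρ : ℝ => Real.log (μ (Metric.closedBall y ρ)).toReal / Real.log ρ)
        (nhdsWithin 0 (Set.Ioi 0))) ∧
    ENNReal.ofReal δ ≤ dimH C :=
  hausdorff_game_lower_bound_general D β ρ₀ δ hβ0 hβ1 hρ σ hsep hcontain hscore C hC μ hμsupp hμ
end
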